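/- arXiv:1705.00144 — 5 statements merged into one kernel-verified Lean document; each statement's English description precedes it below -/
import Mathlib

section
/- For every AIET f of [0,1), the sequence n ↦ #BP(f^n) of cardinalities of break point sets of iterates either is bounded, or grows linearly: there are constants C>0 and N₀ such that #BP(f^n) ≥ C·n for all n ≥ N₀. -/
open Set Filter Function MeasureTheory Topology

noncomputable section

/-- Right derivative of `f` at `x`. -/
def rightD (f : ℝ → ℝ) (x : ℝ) : ℝ := derivWithin f (Set.Ici x) x

/-- Left derivative of `f` at `x`. -/
def leftD (f : ℝ → ℝ) (x : ℝ) : ℝ := derivWithin f (Set.Iic x) x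

/-- Break points of `f` on `[0,1)`: the point `0` together with the
discontinuities of `f` and of its (right) derivative in `(0,1)`. -/
def BP (f : ℝ → ℝ) : Set ℝ :=
  {0} ∪ {x ∈ Set.Ioo (0:ℝ) 1 |
    Function.leftLim f x ≠ f x ∨ Function.leftLim (rightD f) x ≠ rightD f x}

/-- An affine interval exchange transformation of `[0,1)`, modelled as a map of `ℝ`
that is the identity outside `[0,1)`, a bijection of `[0,1)` onto itself, and affine
with positive slope on the pieces of some finite subdivision `0 = a 0 < ... < a p = 1`. -/
structure IsAIET (f : ℝ → ℝ) : Prop where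
  bijOn : Set.BijOn f (Set.Ico 0 1) (Set.Ico 0 1)
  id_outside : ∀ x, x ∉ Set.Ico (0:ℝ) 1 → f x = x
  piecewise : ∃ (p : ℕ) (a : ℕ → ℝ), 0 < p ∧ a 0 = 0 ∧ a p = 1 ∧
    (∀ i j, i < j → j ≤ p → a i < a j) ∧
    ∀ i < p, ∃ lam beta : ℝ, 0 < lam ∧
      ∀ x ∈ Set.Ico (a i) (a (i+1)), f x = lam * x + beta

/-- The jump of slopes of `f` at `x` : `σ_f(x) = D₊f(x)/D₋f(x)` for `x ∈ (0,1)`, and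
`σ_f(0) = D₊f(0)/D₋f(1)`. -/
def jump (f : ℝ → ℝ) (x : ℝ) : ℝ :=
  if x = 0 then rightD f 0 / leftD f 1 else rightD f x / leftD f x

/-- The jump of values of `f` at `x` : `Δ_f(x) = f₊(x) - f₋(x)` for `x ∈ (0,1)`
(here `f₊(x) = f(x)` since AIETs are right-continuous), and `Δ_f(0) = f₊(0) - f₋(1)`. -/
def Δjump (f : ℝ → ℝ) (x : ℝ) : ℝ :=
  if x = 0 then f 0 - Function.leftLim f 1 else f x - Function.leftLim f x

/-- A PL-homeomorphism of `[0,1)` : an AIET which, seen on the circle `[0,1]/(0=1)`,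
is a homeomorphism; equivalently at any interior discontinuity the value jumps from `1` to `0`. -/
def IsPLHomeo (f : ℝ → ℝ) : Prop :=
  IsAIET f ∧ ∀ x ∈ Set.Ioo (0:ℝ) 1,
    Function.leftLim f x ≠ f x → f x = 0 ∧ Function.leftLim f x = 1

/-- Word length of `g` with respect to the finite set `S` (letters in `S ∪ S⁻¹`). -/
def wordLength {G : Type*} [Group G] (S : Finset G) (g : G) : ℕ :=
  sInf {n : ℕ | ∃ w : Fin n → G, (∀ i, w i ∈ S ∨ (w i)⁻¹ ∈ S) ∧ (List.ofFn w).prod = g}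

/-- The restricted rotation of `I = [a,b)` by `δ` (the identity outside `I`). -/
def RR (a b δ : ℝ) (x : ℝ) : ℝ :=
  if x ∈ Set.Ico a (b - δ) then x + δ
  else if x ∈ Set.Ico (b - δ) b then x + δ - (b - a) else x

/-!
Near every point, an AIET `f` and each of its iterates agree on either side with an increasing
affine map (a one-sided germ), and `x ∈ (0,1)` is a break point of `f^[n]` exactly when the two
germs of `f^[n]` at `x` differ. Germs multiply along orbits, and off the finite set `S` of break
points of `f` the two germs of `f` agree. Hence a break point `x` of `f^[n]` is carried back from
the first point `t = f^[k] x` of its orbit in `S`, and `t` is a break point of `f^[n-k]`.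
Conversely, once the forward orbit of a non-periodic `t` avoids `S` and the `f`-preimages of the
left limits of `f` at points of `S`, the break status of `t` under `f^[m]` is frozen. So either
some `t ∈ S` whose backward orbit never returns to `S` breaks under all large iterates, and then
`n - M` points of its backward orbit are break points of `f^[n]`, or each `t ∈ S` accounts for
boundedly many break points of every `f^[n]`.
-/

lemma Function.LeftInverse.iterate_iterate_of_le {α : Type*} {f g : α → α}
    (h : LeftInverse g f) {j k : ℕ} (hjk : j ≤ k) (x : α) : g^[j] (f^[k] x) = f^[k - j] x := by
  obtain ⟨i, rfl⟩ := Nat.exists_eq_add_of_le hjk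
  rw [iterate_add_apply, h.iterate j, Nat.add_sub_cancel_left]

lemma Function.Injective.injective_iterate_apply {α : Type*} {f : α → α} (hf : Injective f)
    {x : α} (hx : x ∉ periodicPts f) : Injective (f^[·] x) := by
  intro i j hij
  wlog hlt : i < j generalizing i j
  · rcases (not_lt.1 hlt).eq_or_lt with h | h
    · exact h.symm
    · exact (this hij.symm h).symm
  refine absurd (mk_mem_periodicPts (Nat.sub_pos_of_lt hlt) (hf.iterate i ?_)) hx
  rw [← iterate_add_apply, Nat.add_sub_cancel' hlt.le]
  exact hij.symm

lemma Function.Injective.notMem_periodicPts_of_invFun {α : Type*} [Nonempty α] {f : α → α}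
    (hf : Injective f) {t : α} (h : ∀ k, 0 < k → (invFun f)^[k] t ≠ t) : t ∉ periodicPts f := by
  rintro ⟨k, hk, hper⟩
  refine h k hk ?_
  conv_lhs => rw [← hper.eq]
  exact (leftInverse_invFun hf).iterate k t

lemma Nat.exists_lt_and_not_succ {P : ℕ → Prop} {n : ℕ} (h0 : P 0) (hn : ¬ P n) :
    ∃ i < n, P i ∧ ¬ P (i + 1) := by
  induction n with
  | zero => exact absurd h0 hn
  | succ n ih =>
    by_cases h : P n
    · exact ⟨n, n.lt_succ_self, h, hn⟩
    · obtain ⟨i, hi, hPi⟩ := ih h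
      exact ⟨i, hi.trans n.lt_succ_self, hPi⟩

@[ext]
structure PosAff where
  slope : ℝ
  shift : ℝ
  slope_pos : 0 < slope

namespace PosAff

def toFun (u : PosAff) (x : ℝ) : ℝ := u.slope * x + u.shift

instance : CoeFun PosAff (fun _ => ℝ → ℝ) := ⟨toFun⟩

lemma apply_eq (u : PosAff) (x : ℝ) : u x = u.slope * x + u.shift := rfl

instance : Mul PosAff :=
  ⟨fun u v => ⟨u.slope * v.slope, u.slope * v.shift + u.shift, mul_pos u.slope_pos v.slope_pos⟩⟩
instance : One PosAff := ⟨⟨1, 0, one_pos⟩⟩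
instance : Inv PosAff := ⟨fun u => ⟨u.slope⁻¹, -(u.shift / u.slope), inv_pos.2 u.slope_pos⟩⟩

@[simp] lemma mul_slope (u v : PosAff) : (u * v).slope = u.slope * v.slope := rfl
@[simp] lemma mul_shift (u v : PosAff) : (u * v).shift = u.slope * v.shift + u.shift := rfl
@[simp] lemma one_slope : (1 : PosAff).slope = 1 := rfl
@[simp] lemma one_shift : (1 : PosAff).shift = 0 := rfl
@[simp] lemma inv_slope (u : PosAff) : u⁻¹.slope = u.slope⁻¹ := rfl
@[simp] lemma inv_shift (u : PosAff) : u⁻¹.shift = -(u.shift / u.slope) := rfl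

instance : Group PosAff where
  mul_assoc u v w := by ext <;> simp only [mul_slope, mul_shift] <;> ring
  one_mul u := by ext <;> simp
  mul_one u := by ext <;> simp
  inv_mul_cancel u := by
    have := u.slope_pos.ne'
    ext <;> simp [this, div_eq_inv_mul]

@[simp] lemma mul_apply (u v : PosAff) (x : ℝ) : (u * v) x = u (v x) := by
  simp only [apply_eq, mul_slope, mul_shift]; ring

@[simp] lemma one_apply (x : ℝ) : (1 : PosAff) x = x := by
  simp [apply_eq]

lemma strictMono (u : PosAff) : StrictMono u := fun _ _ h => by
  simp only [apply_eq]; nlinarith [u.slope_pos]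

lemma continuous (u : PosAff) : Continuous u :=
  (continuous_const.mul continuous_id).add continuous_const

lemma hasDerivAt (u : PosAff) (x : ℝ) : HasDerivAt u u.slope x := by
  have := ((hasDerivAt_id x).const_mul u.slope).add_const u.shift
  rwa [mul_one] at this

lemma ext_of_apply {u v : PosAff} (x : ℝ) (hs : u.slope = v.slope) (hx : u x = v x) : u = v := by
  simp only [apply_eq, hs] at hx
  ext
  · exact hs
  · linarith

end PosAff

def HasRightGerm (g : ℝ → ℝ) (x : ℝ) (u : PosAff) : Prop := ∀ᶠ z in 𝓝[≥] x, g z = u z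

def HasLeftGerm (g : ℝ → ℝ) (x : ℝ) (u : PosAff) : Prop := ∀ᶠ z in 𝓝[<] x, g z = u z

def HasGerm (g : ℝ → ℝ) (x : ℝ) (u : PosAff) : Prop := ∀ᶠ z in 𝓝 x, g z = u z

section Germs

variable {g h : ℝ → ℝ} {x : ℝ} {u v : PosAff}

lemma HasGerm.hasRightGerm (hg : HasGerm g x u) : HasRightGerm g x u :=
  nhdsWithin_le_nhds hg

lemma HasGerm.hasLeftGerm (hg : HasGerm g x u) : HasLeftGerm g x u :=
  nhdsWithin_le_nhds hg

namespace HasRightGerm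

lemma apply_self (hg : HasRightGerm g x u) : g x = u x :=
  hg.self_of_nhdsWithin self_mem_Ici

lemma rightD_eq (hg : HasRightGerm g x u) : rightD g x = u.slope :=
  ((u.hasDerivAt x).hasDerivWithinAt.congr_of_eventuallyEq hg hg.apply_self).derivWithin
    (uniqueDiffOn_Ici x x self_mem_Ici)

lemma unique (hu : HasRightGerm g x u) (hv : HasRightGerm g x v) : u = v :=
  PosAff.ext_of_apply x (hu.rightD_eq.symm.trans hv.rightD_eq)
    (hu.apply_self.symm.trans hv.apply_self)

lemma comp (hg : HasRightGerm g x u) (hh : HasRightGerm h (g x) v) :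
    HasRightGerm (h ∘ g) x (v * u) := by
  have hmaps : Tendsto g (𝓝[≥] x) (𝓝[≥] (g x)) := by
    refine tendsto_nhdsWithin_iff.2 ⟨?_, ?_⟩
    · rw [hg.apply_self]
      exact ((u.continuous.tendsto x).mono_left nhdsWithin_le_nhds).congr'
        (hg.mono fun _ hz => hz.symm)
    · filter_upwards [hg, self_mem_nhdsWithin] with z hz hxz
      rw [hz, hg.apply_self]
      exact u.strictMono.monotone hxz
  filter_upwards [hmaps.eventually hh, hg] with z hhz hgz
  rw [comp_apply, hhz, hgz, PosAff.mul_apply]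

end HasRightGerm

namespace HasLeftGerm

lemma leftLim_eq (hg : HasLeftGerm g x u) : leftLim g x = u x :=
  leftLim_eq_of_tendsto ((u.continuous.tendsto x).mono_left nhdsWithin_le_nhds |>.congr'
    (hg.mono fun _ hz => hz.symm))

lemma leftLim_rightD_eq (hg : HasLeftGerm g x u) : leftLim (rightD g) x = u.slope := by
  obtain ⟨l, hl, hsub⟩ := mem_nhdsLT_iff_exists_Ioo_subset.1 hg
  refine leftLim_eq_of_tendsto (tendsto_const_nhds.congr' ?_)
  filter_upwards [Ioo_mem_nhdsLT hl] with y hy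
  refine (HasRightGerm.rightD_eq ?_).symm
  filter_upwards [Ico_mem_nhdsGE hy.2] with z hz
  exact hsub ⟨hy.1.trans_le hz.1, hz.2⟩

lemma unique (hu : HasLeftGerm g x u) (hv : HasLeftGerm g x v) : u = v :=
  PosAff.ext_of_apply x (hu.leftLim_rightD_eq.symm.trans hv.leftLim_rightD_eq)
    (hu.leftLim_eq.symm.trans hv.leftLim_eq)

lemma comp (hg : HasLeftGerm g x u) (hh : HasLeftGerm h (u x) v) :
    HasLeftGerm (h ∘ g) x (v * u) := by
  have hmaps : Tendsto g (𝓝[<] x) (𝓝[<] (u x)) := by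
    refine tendsto_nhdsWithin_iff.2 ⟨?_, ?_⟩
    · exact ((u.continuous.tendsto x).mono_left nhdsWithin_le_nhds).congr'
        (hg.mono fun _ hz => hz.symm)
    · filter_upwards [hg, self_mem_nhdsWithin] with z hz hzx
      rw [hz]
      exact u.strictMono hzx
  filter_upwards [hmaps.eventually hh, hg] with z hhz hgz
  rw [comp_apply, hhz, hgz, PosAff.mul_apply]

end HasLeftGerm

lemma mem_BP_iff (hx : x ∈ Ioo (0 : ℝ) 1) (hr : HasRightGerm g x u) (hl : HasLeftGerm g x v) :
    x ∈ BP g ↔ u ≠ v := by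
  have hx0 : x ≠ 0 := hx.1.ne'
  simp only [BP, mem_union, mem_singleton_iff, hx0, false_or, mem_ofPred_eq, hx, true_and,
    hl.leftLim_eq, hr.apply_self, hl.leftLim_rightD_eq, hr.rightD_eq]
  constructor
  · rintro h rfl
    simp at h
  · intro h
    by_contra! hc
    exact h (PosAff.ext_of_apply x hc.2.symm hc.1.symm)

open Classical in
def rightGerm (g : ℝ → ℝ) (x : ℝ) : PosAff :=
  if h : ∃ u, HasRightGerm g x u then h.choose else 1

open Classical in
def leftGerm (g : ℝ → ℝ) (x : ℝ) : PosAff :=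
  if h : ∃ u, HasLeftGerm g x u then h.choose else 1

def IsBreak (g : ℝ → ℝ) (x : ℝ) : Prop := rightGerm g x ≠ leftGerm g x

lemma HasRightGerm.rightGerm_eq (hg : HasRightGerm g x u) : rightGerm g x = u := by
  have h : ∃ u, HasRightGerm g x u := ⟨u, hg⟩
  rw [rightGerm, dif_pos h]
  exact h.choose_spec.unique hg

lemma HasLeftGerm.leftGerm_eq (hg : HasLeftGerm g x u) : leftGerm g x = u := by
  have h : ∃ u, HasLeftGerm g x u := ⟨u, hg⟩
  rw [leftGerm, dif_pos h]
  exact h.choose_spec.unique hg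

lemma HasGerm.not_isBreak (hg : HasGerm g x u) : ¬ IsBreak g x := by
  rw [IsBreak, hg.hasRightGerm.rightGerm_eq, hg.hasLeftGerm.leftGerm_eq, not_ne_iff]

lemma hasGerm_id (x : ℝ) : HasGerm id x 1 := by
  filter_upwards with z using (PosAff.one_apply z).symm

end Germs

structure IsPiecewiseAffine (f : ℝ → ℝ) (S : Finset ℝ) : Prop where
  exists_hasRightGerm : ∀ x, ∃ u, HasRightGerm f x u
  exists_hasLeftGerm : ∀ x, ∃ u, HasLeftGerm f x u
  exists_hasGerm : ∀ x ∉ S, ∃ u, HasGerm f x u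

namespace IsPiecewiseAffine

variable {f : ℝ → ℝ} {S : Finset ℝ} (hS : IsPiecewiseAffine f S)
include hS

lemma hasRightGerm (x : ℝ) : HasRightGerm f x (rightGerm f x) :=
  have h := (hS.exists_hasRightGerm x).choose_spec
  h.rightGerm_eq ▸ h

lemma hasLeftGerm (x : ℝ) : HasLeftGerm f x (leftGerm f x) :=
  have h := (hS.exists_hasLeftGerm x).choose_spec
  h.leftGerm_eq ▸ h

lemma hasRightGerm_iterate (n : ℕ) (x : ℝ) : HasRightGerm (f^[n]) x (rightGerm (f^[n]) x) := by
  induction n generalizing x with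
  | zero => exact (hasGerm_id x).hasRightGerm.rightGerm_eq ▸ (hasGerm_id x).hasRightGerm
  | succ n ih =>
    have h := iterate_succ' f n ▸ (ih x).comp (hS.hasRightGerm _)
    exact h.rightGerm_eq ▸ h

lemma hasLeftGerm_iterate (n : ℕ) (x : ℝ) : HasLeftGerm (f^[n]) x (leftGerm (f^[n]) x) := by
  induction n generalizing x with
  | zero => exact (hasGerm_id x).hasLeftGerm.leftGerm_eq ▸ (hasGerm_id x).hasLeftGerm
  | succ n ih =>
    have h := iterate_succ' f n ▸ (ih x).comp (hS.hasLeftGerm _)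
    exact h.leftGerm_eq ▸ h

lemma rightGerm_eq_leftGerm {x : ℝ} (hx : x ∉ S) : rightGerm f x = leftGerm f x := by
  obtain ⟨u, hu⟩ := hS.exists_hasGerm x hx
  rw [hu.hasRightGerm.rightGerm_eq, hu.hasLeftGerm.leftGerm_eq]

lemma leftLim_eq {x : ℝ} (hx : x ∉ S) : leftLim f x = f x := by
  obtain ⟨u, hu⟩ := hS.exists_hasGerm x hx
  rw [hu.hasLeftGerm.leftLim_eq, hu.hasRightGerm.apply_self]

lemma mem_BP_iterate_iff {x : ℝ} (hx : x ∈ Ioo (0 : ℝ) 1) (n : ℕ) :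
    x ∈ BP (f^[n]) ↔ IsBreak (f^[n]) x :=
  mem_BP_iff hx (hS.hasRightGerm_iterate n x) (hS.hasLeftGerm_iterate n x)

lemma isBreak_iterate_succ_iff {x : ℝ} (hx : x ∉ S) (n : ℕ) :
    IsBreak (f^[n + 1]) x ↔ IsBreak (f^[n]) (f x) := by
  obtain ⟨u, hu⟩ := hS.exists_hasGerm x hx
  have hfx : f x = u x := hu.hasRightGerm.apply_self
  have hr := hu.hasRightGerm.comp (hS.hasRightGerm_iterate n (f x))
  have hl := hu.hasLeftGerm.comp (hfx ▸ hS.hasLeftGerm_iterate n (f x))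
  rw [IsBreak, IsBreak, iterate_succ, hr.rightGerm_eq, hl.leftGerm_eq, ne_eq, ne_eq, mul_left_inj,
    ← hfx]

lemma isBreak_iterate_succ_iff_of_notMem (hf : Injective f) {x : ℝ} {n : ℕ}
    (hS₁ : f^[n] x ∉ S) (hS₂ : f (f^[n] x) ∉ leftLim f '' S) :
    IsBreak (f^[n + 1]) x ↔ IsBreak (f^[n]) x := by
  have hr₀ := hS.hasRightGerm_iterate n x
  have hl₀ := hS.hasLeftGerm_iterate n x
  generalize rightGerm (f^[n]) x = u at hr₀
  generalize leftGerm (f^[n]) x = v at hl₀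
  rw [IsBreak, IsBreak, iterate_succ', hr₀.rightGerm_eq, hl₀.leftGerm_eq,
    (hr₀.comp (hS.hasRightGerm _)).rightGerm_eq, (hl₀.comp (hS.hasLeftGerm _)).leftGerm_eq,
    hr₀.apply_self]
  rw [hr₀.apply_self] at hS₁ hS₂
  refine not_congr ⟨fun h => ?_, fun h => ?_⟩
  -- If the germs of `f^[n+1]` agree, so do the values `f (u x) = leftLim f (v x)`; the
  -- hypotheses force `v x ∉ S`, and then injectivity gives `u x = v x`.
  · have hval : f (u x) = leftLim f (v x) := by
      rw [(hS.hasRightGerm _).apply_self, (hS.hasLeftGerm _).leftLim_eq,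
        ← PosAff.mul_apply, ← PosAff.mul_apply, h]
    have hvS : v x ∉ S := fun hv => hS₂ ⟨v x, hv, hval.symm⟩
    rw [hf (hval.trans (hS.leftLim_eq hvS)), hS.rightGerm_eq_leftGerm hvS] at h
    exact mul_left_cancel h
  · rw [h, hS.rightGerm_eq_leftGerm (h ▸ hS₁)]

lemma isBreak_iterate_add_iff {x : ℝ} {k : ℕ} (hx : ∀ j < k, f^[j] x ∉ S) (m : ℕ) :
    IsBreak (f^[m + k]) x ↔ IsBreak (f^[m]) (f^[k] x) := by
  induction k generalizing x with
  | zero => rfl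
  | succ k ih =>
    rw [← add_assoc, hS.isBreak_iterate_succ_iff (x := x) (hx 0 k.succ_pos), iterate_succ_apply]
    exact ih fun j hj => hx (j + 1) (Nat.succ_lt_succ hj)

lemma exists_first_mem_of_isBreak {x : ℝ} {n : ℕ} (hx : IsBreak (f^[n]) x) :
    ∃ k < n, f^[k] x ∈ S ∧ (∀ j < k, f^[j] x ∉ S) ∧ IsBreak (f^[n - k]) (f^[k] x) := by
  classical
  have hmem : ∃ k, k < n ∧ f^[k] x ∈ S := by
    by_contra! h
    rw [← zero_add n, hS.isBreak_iterate_add_iff h] at hx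
    exact (hasGerm_id _).not_isBreak hx
  obtain ⟨hlt, hkS⟩ := Nat.find_spec hmem
  have hfirst : ∀ j < Nat.find hmem, f^[j] x ∉ S := fun j hj hjS =>
    Nat.find_min hmem hj ⟨hj.trans hlt, hjS⟩
  refine ⟨_, hlt, hkS, hfirst, ?_⟩
  rwa [← hS.isBreak_iterate_add_iff hfirst, Nat.sub_add_cancel hlt.le]

lemma exists_forall_ge_isBreak_iterate_iff (hf : Injective f) {t : ℝ}
    (ht : t ∉ periodicPts f) : ∃ M, ∀ m ≥ M, IsBreak (f^[m]) t ↔ IsBreak (f^[M]) t := by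
  let W : Set ℝ := S ∪ f ⁻¹' (leftLim f '' S)
  have hW : W.Finite :=
    S.finite_toSet.union ((S.finite_toSet.image _).preimage hf.injOn)
  obtain ⟨M, hM⟩ := (hW.preimage (hf.injective_iterate_apply ht).injOn).bddAbove
  refine ⟨M + 1, fun m hm => ?_⟩
  induction m, hm using Nat.le_induction with
  | base => rfl
  | succ m hm ih =>
    have hout : f^[m] t ∉ W := fun h => by have := hM h; omega
    rw [← ih, hS.isBreak_iterate_succ_iff_of_notMem hf (fun h => hout (Or.inl h))
      (fun h => hout (Or.inr h))]

end IsPiecewiseAffine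

def IsPersistentSource (f : ℝ → ℝ) (S : Finset ℝ) (t : ℝ) : Prop :=
  t ∈ S ∧ (∀ k, 0 < k → (invFun f)^[k] t ∉ S) ∧ ∃ M, ∀ m ≥ M, IsBreak (f^[m]) t

open Classical in
def breakTimes (f : ℝ → ℝ) (S : Finset ℝ) (t : ℝ) (n : ℕ) : Finset ℕ :=
  (Finset.range n).filter fun k =>
    (∀ j, 0 < j → j ≤ k → (invFun f)^[j] t ∉ S) ∧ IsBreak (f^[n - k]) t

lemma mem_breakTimes {f : ℝ → ℝ} {S : Finset ℝ} {t : ℝ} {n k : ℕ} :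
    k ∈ breakTimes f S t n ↔
      k < n ∧ (∀ j, 0 < j → j ≤ k → (invFun f)^[j] t ∉ S) ∧ IsBreak (f^[n - k]) t := by
  simp [breakTimes]

lemma card_breakTimes_le_of_mem {f : ℝ → ℝ} {S : Finset ℝ} {t : ℝ} {k : ℕ} (hk : 0 < k)
    (hkS : (invFun f)^[k] t ∈ S) (n : ℕ) : (breakTimes f S t n).card ≤ k := by
  refine (Finset.card_le_card fun i hi => ?_).trans (Finset.card_range k).le
  rw [mem_breakTimes] at hi
  exact Finset.mem_range.2 (not_le.1 fun hki => hi.2.1 k hk hki hkS)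

lemma card_breakTimes_le_of_not_isBreak {f : ℝ → ℝ} {S : Finset ℝ} {t : ℝ} {M : ℕ}
    (hM : ∀ m ≥ M, ¬ IsBreak (f^[m]) t) (n : ℕ) : (breakTimes f S t n).card ≤ M := by
  refine (Finset.card_le_card_of_injOn (n - ·) (fun k hk => ?_) fun i hi j hj hij => ?_).trans
    (Finset.card_range M).le
  · rw [Finset.mem_coe, mem_breakTimes] at hk
    exact Finset.mem_range.2 (not_le.1 fun h => hM _ h hk.2.2)
  · rw [Finset.mem_coe, mem_breakTimes] at hi hj
    simp only at hij
    omega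

namespace IsPiecewiseAffine

variable {f : ℝ → ℝ} {S : Finset ℝ} (hS : IsPiecewiseAffine f S)
include hS

lemma BP_iterate_subset (hf : Injective f) (n : ℕ) :
    BP (f^[n]) ⊆ insert 0
      ↑(S.biUnion fun t => (breakTimes f S t n).image fun k => (invFun f)^[k] t) := by
  classical
  rintro x (hx | ⟨hx, hbrk⟩)
  · exact Or.inl hx
  · have hbrk := (hS.mem_BP_iterate_iff hx n).1 (Or.inr ⟨hx, hbrk⟩)
    obtain ⟨k, hkn, hkS, hfirst, hbrk⟩ := hS.exists_first_mem_of_isBreak hbrk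
    have hinv := leftInverse_invFun hf
    refine Or.inr (Finset.mem_biUnion.2 ⟨_, hkS, Finset.mem_image.2 ⟨k, ?_, hinv.iterate k x⟩⟩)
    rw [mem_breakTimes]
    refine ⟨hkn, fun j hj hjk => ?_, hbrk⟩
    rw [hinv.iterate_iterate_of_le hjk]
    exact hfirst _ (Nat.sub_lt (hj.trans_le hjk) hj)

lemma BP_iterate_finite (hf : Injective f) (n : ℕ) : (BP (f^[n])).Finite :=
  ((Finset.finite_toSet _).insert 0).subset (hS.BP_iterate_subset hf n)

lemma ncard_BP_iterate_le (hf : Injective f) (n : ℕ) :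
    (BP (f^[n])).ncard ≤ 1 + ∑ t ∈ S, (breakTimes f S t n).card := by
  classical
  refine (Set.ncard_le_ncard (hS.BP_iterate_subset hf n) ((Finset.finite_toSet _).insert 0)
    |>.trans (Set.ncard_insert_le _ _)).trans ?_
  rw [Set.ncard_coe_finset, add_comm]
  gcongr
  exact Finset.card_biUnion_le.trans (Finset.sum_le_sum fun t _ => Finset.card_image_le)

lemma exists_ncard_BP_iterate_le (hf : Injective f) (h : ¬ ∃ t, IsPersistentSource f S t) :
    ∃ C, ∀ n, (BP (f^[n])).ncard ≤ C := by
  have hbound : ∀ t ∈ S, ∃ c, ∀ n, (breakTimes f S t n).card ≤ c := by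
    intro t ht
    by_cases havoid : ∀ k, 0 < k → (invFun f)^[k] t ∉ S
    · obtain ⟨M, hM⟩ := hS.exists_forall_ge_isBreak_iterate_iff hf
        (hf.notMem_periodicPts_of_invFun fun k hk h => havoid k hk (h ▸ ht))
      refine ⟨M, card_breakTimes_le_of_not_isBreak fun m hm hbrk => h ⟨t, ht, havoid, M, ?_⟩⟩
      exact fun m' hm' => (hM m' hm').2 ((hM m hm).1 hbrk)
    · push Not at havoid
      obtain ⟨k, hk, hkS⟩ := havoid
      exact ⟨k, card_breakTimes_le_of_mem hk hkS⟩
  choose! c hc using hbound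
  exact ⟨1 + ∑ t ∈ S, c t, fun n => (hS.ncard_BP_iterate_le hf n).trans
    (by gcongr with t ht; exact hc t ht n)⟩

end IsPiecewiseAffine

namespace IsAIET

variable {f : ℝ → ℝ} (hf : IsAIET f)
include hf

lemma bijective : Bijective f := by
  refine ⟨fun x y hxy => ?_, fun y => ?_⟩
  · by_cases hx : x ∈ Ico (0 : ℝ) 1 <;> by_cases hy : y ∈ Ico (0 : ℝ) 1
    · exact hf.bijOn.injOn hx hy hxy
    · have h := hf.bijOn.mapsTo hx
      rw [hxy, hf.id_outside y hy] at h
      exact absurd h hy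
    · have h := hf.bijOn.mapsTo hy
      rw [← hxy, hf.id_outside x hx] at h
      exact absurd h hx
    · rwa [hf.id_outside x hx, hf.id_outside y hy] at hxy
  · by_cases hy : y ∈ Ico (0 : ℝ) 1
    · obtain ⟨x, -, hx⟩ := hf.bijOn.surjOn hy
      exact ⟨x, hx⟩
    · exact ⟨y, hf.id_outside y hy⟩

lemma mapsTo_invFun : MapsTo (invFun f) (Ico 0 1) (Ico 0 1) := by
  intro y hy
  obtain ⟨x, hx, rfl⟩ := hf.bijOn.surjOn hy
  rwa [leftInverse_invFun hf.bijective.injective x]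

lemma exists_pieces : ∃ (p : ℕ) (a : ℕ → ℝ), a 0 = 0 ∧ a p = 1 ∧
    ∀ i < p, ∃ u : PosAff, EqOn f u (Ico (a i) (a (i + 1))) := by
  obtain ⟨p, a, -, ha0, hap, -, hpiece⟩ := hf.piecewise
  refine ⟨p, a, ha0, hap, fun i hi => ?_⟩
  obtain ⟨lam, beta, hlam, heq⟩ := hpiece i hi
  exact ⟨⟨lam, beta, hlam⟩, heq⟩

lemma hasGerm_one {x : ℝ} (hx : x ∉ Icc (0 : ℝ) 1) : HasGerm f x 1 := by
  filter_upwards [isClosed_Icc.isOpen_compl.mem_nhds hx] with z hz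
  rw [hf.id_outside z fun h => hz (Ico_subset_Icc_self h), PosAff.one_apply]

lemma exists_hasRightGerm (x : ℝ) : ∃ u, HasRightGerm f x u := by
  obtain ⟨p, a, ha0, hap, hpiece⟩ := hf.exists_pieces
  by_cases hx : x ∈ Ico (0 : ℝ) 1
  · obtain ⟨i, hi, h1, h2⟩ := Nat.exists_lt_and_not_succ (P := fun i => a i ≤ x) (n := p)
      (ha0 ▸ hx.1) (by simp [hap, hx.2])
    obtain ⟨u, hu⟩ := hpiece i hi
    exact ⟨u, mem_of_superset (Ico_mem_nhdsGE (not_le.1 h2)) fun z hz =>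
      hu ⟨h1.trans hz.1, hz.2⟩⟩
  rcases lt_or_ge x 0 with hx0 | hx0
  · exact ⟨1, (hf.hasGerm_one fun h => hx0.not_ge h.1).hasRightGerm⟩
  have hx1 : 1 ≤ x := not_lt.1 fun h => hx ⟨hx0, h⟩
  refine ⟨1, ?_⟩
  filter_upwards [self_mem_nhdsWithin] with z (hz : x ≤ z)
  rw [hf.id_outside z fun h => (hx1.trans hz).not_gt h.2, PosAff.one_apply]

lemma exists_hasLeftGerm (x : ℝ) : ∃ u, HasLeftGerm f x u := by
  obtain ⟨p, a, ha0, hap, hpiece⟩ := hf.exists_pieces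
  by_cases hx : x ∈ Ioc (0 : ℝ) 1
  · obtain ⟨i, hi, h1, h2⟩ := Nat.exists_lt_and_not_succ (P := fun i => a i < x) (n := p)
      (ha0 ▸ hx.1) (by simp [hap, hx.2])
    obtain ⟨u, hu⟩ := hpiece i hi
    exact ⟨u, mem_of_superset (Ioo_mem_nhdsLT h1) fun z hz =>
      hu ⟨hz.1.le, hz.2.trans_le (not_lt.1 h2)⟩⟩
  rcases lt_or_ge 1 x with hx1 | hx1
  · exact ⟨1, (hf.hasGerm_one fun h => hx1.not_ge h.2).hasLeftGerm⟩
  have hx0 : x ≤ 0 := not_lt.1 fun h => hx ⟨h, hx1⟩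
  refine ⟨1, ?_⟩
  filter_upwards [self_mem_nhdsWithin] with z (hz : z < x)
  rw [hf.id_outside z fun h => (hz.trans_le hx0).not_ge h.1, PosAff.one_apply]

lemma exists_finset_hasGerm : ∃ S : Finset ℝ, (0 : ℝ) ∈ S ∧ ∀ x ∉ S, ∃ u, HasGerm f x u := by
  classical
  obtain ⟨p, a, ha0, hap, hpiece⟩ := hf.exists_pieces
  refine ⟨(Finset.range (p + 1)).image a, Finset.mem_image.2 ⟨0, by simp, ha0⟩, fun x hx => ?_⟩
  have hS : ∀ i ≤ p, a i ≠ x := fun i hi h =>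
    hx (Finset.mem_image.2 ⟨i, Finset.mem_range.2 (Nat.lt_succ_of_le hi), h⟩)
  by_cases hx01 : x ∈ Icc (0 : ℝ) 1
  · have hx1 : x < 1 := hx01.2.lt_of_ne fun h => hS p le_rfl (hap.trans h.symm)
    obtain ⟨i, hi, h1, h2⟩ := Nat.exists_lt_and_not_succ (P := fun i => a i ≤ x) (n := p)
      (ha0 ▸ hx01.1) (by simp [hap, hx1])
    obtain ⟨u, hu⟩ := hpiece i hi
    exact ⟨u, mem_of_superset (Ioo_mem_nhds (h1.lt_of_ne (hS i hi.le)) (not_le.1 h2))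
      fun z hz => hu ⟨hz.1.le, hz.2⟩⟩
  · exact ⟨1, hf.hasGerm_one hx01⟩

lemma exists_isPiecewiseAffine : ∃ S : Finset ℝ, IsPiecewiseAffine f S ∧ (0 : ℝ) ∈ S :=
  let ⟨S, h0, hS⟩ := hf.exists_finset_hasGerm
  ⟨S, ⟨hf.exists_hasRightGerm, hf.exists_hasLeftGerm, hS⟩, h0⟩

lemma exists_le_ncard_BP_iterate {S : Finset ℝ} (hS : IsPiecewiseAffine f S) (h0 : (0 : ℝ) ∈ S)
    {t : ℝ} (ht : IsPersistentSource f S t) : ∃ M, ∀ n, n ≤ (BP (f^[n])).ncard + M := by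
  classical
  obtain ⟨htS, havoid, M, hM⟩ := ht
  have hinv : RightInverse (invFun f) f := rightInverse_invFun hf.bijective.surjective
  have ht01 : t ∈ Ico (0 : ℝ) 1 := by
    by_contra h
    refine havoid 1 one_pos ?_
    rwa [iterate_one, ← hf.id_outside t h, leftInverse_invFun hf.bijective.injective]
  have hinj : Injective ((invFun f)^[·] t) :=
    hinv.injective.injective_iterate_apply fun ⟨k, hk, hper⟩ => havoid k hk (by rwa [hper.eq])
  refine ⟨M, fun n => ?_⟩
  have hsub : ↑((Finset.Icc 1 (n - M)).image ((invFun f)^[·] t)) ⊆ BP (f^[n]) := by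
    intro x hx
    obtain ⟨k, hk, rfl⟩ := Finset.mem_image.1 hx
    obtain ⟨hk1, hkn⟩ := Finset.mem_Icc.1 hk
    have hne : (invFun f)^[k] t ≠ 0 := fun h => havoid k hk1 (h ▸ h0)
    have hmem := hf.mapsTo_invFun.iterate k ht01
    rw [hS.mem_BP_iterate_iff ⟨hmem.1.lt_of_ne hne.symm, hmem.2⟩, ← Nat.sub_add_cancel
      (show k ≤ n by omega), hS.isBreak_iterate_add_iff, hinv.iterate k t]
    · exact hM _ (by omega)
    · intro j hj
      rw [LeftInverse.iterate_iterate_of_le hinv hj.le]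
      exact havoid _ (Nat.sub_pos_of_lt hj)
  have hcard := Set.ncard_le_ncard hsub (hS.BP_iterate_finite hf.bijective.injective n)
  rw [Set.ncard_coe_finset, Finset.card_image_of_injective _ hinj, Nat.card_Icc] at hcard
  omega

end IsAIET

theorem stmt_6 (f : ℝ → ℝ) (hf : IsAIET f) :
    (∃ C : ℕ, ∀ n : ℕ, (BP (f^[n])).ncard ≤ C) ∨
    (∃ C : ℝ, 0 < C ∧ ∃ N₀ : ℕ, ∀ n : ℕ, N₀ ≤ n →
      C * n ≤ ((BP (f^[n])).ncard : ℝ)) := by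
  obtain ⟨S, hS, h0⟩ := hf.exists_isPiecewiseAffine
  by_cases h : ∃ t, IsPersistentSource f S t
  · obtain ⟨t, ht⟩ := h
    obtain ⟨M, hM⟩ := hf.exists_le_ncard_BP_iterate hS h0 ht
    refine Or.inr ⟨1 / 2, one_half_pos, 2 * M, fun n hn => ?_⟩
    have hn' : (2 * M : ℝ) ≤ n := by exact_mod_cast hn
    have hM' : (n : ℝ) ≤ (BP (f^[n])).ncard + M := by exact_mod_cast hM n
    linarith
  · exact Or.inl (hS.exists_ncard_BP_iterate_le hf.bijective.injective h)
end
end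

section
/- If f is a distorted element of the group of AIETs of [0,1), then the sequence of cardinalities #BP(f^n) of break points of the iterates of f is bounded. -/
open Set Filter Function MeasureTheory Topology

noncomputable section

/-!
Call `x` singular for a map if the map is not affine, with nonzero slope, near `x`. Break points
other than `0` are singular, and singular sets form a cocycle:
`Sing (g ∘ h) ⊆ Sing h ∪ h⁻¹ (Sing g)` and `Sing g⁻¹ = g (Sing g)`. Hence `#Sing g` is at most a constant times the word length of `g`,
so for a distorted `f` the number `#Sing (f ^ n)` grows sublinearly.

On the other hand every singular point of `f ^ n` is `f ^ (-m) c` for a singular point `c` of `f`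
whose backward orbit reaches it without meeting `Sing f`. If `#Sing (f ^ n)` is unbounded, some
`c` contributes unboundedly. Its backward orbit then never returns to `Sing f`, so `c` is not
periodic and its forward orbit meets `Sing f` only finitely often; past that time, once `c` is
regular for `f ^ k` it stays regular for all later iterates. As `c ∈ Sing (f ^ k)` for infinitely
many `k` (otherwise its contribution is bounded), `c ∈ Sing (f ^ k)` for all `k ≥ K`, and then the
points `f ^ (-m) c`, `m ≤ n - K`, are singular for `f ^ n`: linear growth, contradicting distortion.
-/

open Equiv

def IsLocallyAffineAt (f : ℝ → ℝ) (x : ℝ) : Prop :=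
  ∃ a b : ℝ, a ≠ 0 ∧ f =ᶠ[𝓝 x] fun y => a * y + b

def singularSet (f : ℝ → ℝ) : Set ℝ := {x | ¬IsLocallyAffineAt f x}

section LocallyAffine

variable {f g : ℝ → ℝ} {x : ℝ}

lemma isLocallyAffineAt_id (x : ℝ) : IsLocallyAffineAt id x :=
  ⟨1, 0, one_ne_zero, .of_eq (by ext; simp)⟩

lemma isLocallyAffineAt_of_eqOn {s : Set ℝ} (hs : s ∈ 𝓝 x) {a b : ℝ} (ha : a ≠ 0)
    (h : ∀ y ∈ s, f y = a * y + b) : IsLocallyAffineAt f x :=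
  ⟨a, b, ha, Filter.eventually_of_mem hs h⟩

lemma IsLocallyAffineAt.continuousAt (hf : IsLocallyAffineAt f x) : ContinuousAt f x := by
  obtain ⟨a, b, -, h⟩ := hf
  exact (continuousAt_congr h).2 (by fun_prop)

lemma IsLocallyAffineAt.comp (hg : IsLocallyAffineAt g (f x)) (hf : IsLocallyAffineAt f x) :
    IsLocallyAffineAt (g ∘ f) x := by
  have hfx := hf.continuousAt.tendsto
  obtain ⟨a, b, ha, hfa⟩ := hf
  obtain ⟨c, d, hc, hgc⟩ := hg
  refine ⟨c * a, c * b + d, mul_ne_zero hc ha, ?_⟩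
  filter_upwards [hgc.comp_tendsto hfx, hfa] with y hy hy'
  simp only [comp_apply] at hy ⊢
  rw [hy, hy']
  ring

lemma IsLocallyAffineAt.symm {e : ℝ ≃ ℝ} (he : IsLocallyAffineAt e x) :
    IsLocallyAffineAt e.symm (e x) := by
  obtain ⟨a, b, ha, hea⟩ := he
  have hinv : Tendsto (fun y => (y - b) / a) (𝓝 (e x)) (𝓝 x) := by
    have hx : (e x - b) / a = x := by rw [hea.eq_of_nhds]; field_simp; ring
    simpa only [hx] using (by fun_prop : Continuous fun y => (y - b) / a).tendsto (e x)
  refine ⟨a⁻¹, -b / a, inv_ne_zero ha, ?_⟩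
  filter_upwards [hea.comp_tendsto hinv] with y hy
  rw [comp_apply, comp_apply, show a * ((y - b) / a) + b = y by field_simp; ring] at hy
  rw [← e.eq_symm_apply.2 hy]
  ring

lemma singularSet_comp_subset (g f : ℝ → ℝ) :
    singularSet (g ∘ f) ⊆ singularSet f ∪ f ⁻¹' singularSet g := by
  intro x hx
  by_contra! h
  simp only [mem_union, mem_preimage, singularSet, mem_ofPred_eq, not_or, not_not] at h
  exact hx (h.2.comp h.1)

lemma singularSet_symm_subset (e : ℝ ≃ ℝ) : singularSet e.symm ⊆ e '' singularSet e := by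
  intro y hy
  refine ⟨e.symm y, fun h => hy ?_, e.apply_symm_apply y⟩
  simpa using h.symm

lemma singularSet_id : singularSet id = ∅ :=
  eq_empty_of_forall_notMem fun x hx => hx (isLocallyAffineAt_id x)

end LocallyAffine

lemma leftLim_eq_of_eventuallyEq {f φ : ℝ → ℝ} {x : ℝ} (h : f =ᶠ[𝓝 x] φ)
    (hφ : ContinuousAt φ x) : leftLim f x = φ x :=
  leftLim_eq_of_tendsto ((hφ.tendsto.congr' h.symm).mono_left nhdsWithin_le_nhds)

lemma rightD_eq_of_eventuallyEq {f : ℝ → ℝ} {x a b : ℝ} (h : f =ᶠ[𝓝 x] fun y => a * y + b) :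
    rightD f x = a := by
  rw [rightD, (h.filter_mono nhdsWithin_le_nhds).derivWithin_eq h.eq_of_nhds]
  simpa using (((hasDerivAt_id x).const_mul a).add_const b).hasDerivWithinAt.derivWithin
    (uniqueDiffOn_Ici x x self_mem_Ici)

lemma BP_subset_insert_singularSet (f : ℝ → ℝ) : BP f ⊆ insert 0 (singularSet f) := by
  rintro x (hx | ⟨-, hjump⟩)
  · exact .inl hx
  refine .inr fun ⟨a, b, _, hf⟩ => ?_
  have hslope : rightD f =ᶠ[𝓝 x] fun _ => a :=
    hf.eventuallyEq_nhds.mono fun y hy => rightD_eq_of_eventuallyEq hy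
  rcases hjump with hval | hder
  · exact hval ((leftLim_eq_of_eventuallyEq hf (by fun_prop)).trans hf.eq_of_nhds.symm)
  · exact hder ((leftLim_eq_of_eventuallyEq hslope (by fun_prop)).trans hslope.eq_of_nhds.symm)

lemma exists_mem_Ico_succ (a : ℕ → ℝ) {x : ℝ} :
    ∀ {p : ℕ}, x ∈ Ico (a 0) (a p) → ∃ i < p, x ∈ Ico (a i) (a (i + 1))
  | 0, hx => absurd hx.2 (not_lt.2 hx.1)
  | p + 1, hx => by
    by_cases hxp : x < a p
    · obtain ⟨i, hi, hxi⟩ := exists_mem_Ico_succ a ⟨hx.1, hxp⟩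
      exact ⟨i, by omega, hxi⟩
    · exact ⟨p, by omega, not_lt.1 hxp, hx.2⟩

lemma IsAIET.finite_singularSet {f : ℝ → ℝ} (hf : IsAIET f) : (singularSet f).Finite := by
  obtain ⟨p, a, -, h0, hp, -, hpiece⟩ := hf.piecewise
  refine ((finite_Iic p).image a).subset fun x hx => ?_
  by_contra hxa
  apply hx
  by_cases hx01 : x ∈ Icc 0 1
  · have hx1 : x ≠ a p := fun h => hxa ⟨p, self_mem_Iic, h.symm⟩
    obtain ⟨i, hi, hxi⟩ := exists_mem_Ico_succ a
      ⟨h0 ▸ hx01.1, lt_of_le_of_ne (hp ▸ hx01.2) hx1⟩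
    have hxi' : x ∈ Ioo (a i) (a (i + 1)) :=
      ⟨lt_of_le_of_ne hxi.1 fun h => hxa ⟨i, mem_Iic.2 hi.le, h⟩, hxi.2⟩
    obtain ⟨lam, beta, hlam, hform⟩ := hpiece i hi
    exact isLocallyAffineAt_of_eqOn (isOpen_Ioo.mem_nhds hxi') hlam.ne'
      fun y hy => hform y (Ioo_subset_Ico_self hy)
  · exact isLocallyAffineAt_of_eqOn (isClosed_Icc.isOpen_compl.mem_nhds hx01) one_ne_zero
      (b := 0) fun y hy => by simpa using hf.id_outside y fun h => hy (Ico_subset_Icc_self h)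

lemma Equiv.Perm.injective_pow_apply {α : Type*} {g : Perm α} {x : α}
    (hx : ∀ p, 0 < p → (g ^ p) x ≠ x) : Injective fun n : ℕ => (g ^ n) x := by
  intro a b hab
  by_contra hne
  wlog hlt : a < b generalizing a b
  · exact this hab.symm (Ne.symm hne) (lt_of_le_of_ne (not_lt.1 hlt) (Ne.symm hne))
  refine hx (b - a) (by omega) ((g ^ a).injective ?_)
  rw [← Perm.mul_apply, ← pow_add, Nat.add_sub_cancel' hlt.le]
  exact hab.symm

lemma Equiv.Perm.apply_inv_pow_succ_apply {α : Type*} (f : Perm α) (m : ℕ) (c : α) :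
    f ((f⁻¹ ^ (m + 1)) c) = (f⁻¹ ^ m) c := by
  rw [pow_succ', Perm.mul_apply]
  exact f.apply_symm_apply _

lemma Set.Infinite.Ici_subset_of_notMem_succ {T : Set ℕ} (hT : T.Infinite) {K : ℕ}
    (h : ∀ k ≥ K, k ∉ T → k + 1 ∉ T) : Ici K ⊆ T := by
  intro k hk
  by_contra hkT
  refine hT ((finite_Iio k).subset fun j hj => ?_)
  by_contra hjk
  exact Nat.le_induction hkT (fun j hkj hj => h j (le_trans hk hkj) hj) j (not_lt.1 hjk) hj

lemma Finset.exists_unbounded_of_unbounded_sum {ι : Type*} (s : Finset ι) (u : ι → ℕ → ℕ)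
    (h : ∀ C, ∃ n, C < ∑ i ∈ s, u i n) : ∃ i ∈ s, ∀ C, ∃ n, C < u i n := by
  by_contra! hbdd
  choose! C hC using hbdd
  obtain ⟨n, hn⟩ := h (∑ i ∈ s, C i)
  exact hn.not_ge (Finset.sum_le_sum fun i hi => hC i hi n)

section Iterates

variable {f : Perm ℝ} {c : ℝ}

lemma finite_singularSet_pow (hB : (singularSet f).Finite) (n : ℕ) :
    (singularSet ⇑(f ^ n)).Finite := by
  induction n with
  | zero => simp [singularSet_id]
  | succ n ih =>
    rw [pow_succ, Perm.coe_mul]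
    exact (hB.union (ih.preimage f.injective.injOn)).subset (singularSet_comp_subset _ _)

lemma mem_singularSet_pow_succ_iff {x : ℝ} (hx : x ∉ singularSet f) (n : ℕ) :
    x ∈ singularSet ⇑(f ^ (n + 1)) ↔ f x ∈ singularSet ⇑(f ^ n) := by
  constructor
  · intro h
    rw [pow_succ, Perm.coe_mul] at h
    exact (singularSet_comp_subset _ _ h).resolve_left hx
  · intro h
    have hcomp : ⇑(f ^ n) = ⇑(f ^ (n + 1)) ∘ f.symm := by
      rw [pow_succ, Perm.coe_mul, comp_assoc, f.self_comp_symm, comp_id]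
    rw [hcomp] at h
    rcases singularSet_comp_subset _ _ h with h | h
    · obtain ⟨y, hy, hyx⟩ := singularSet_symm_subset f h
      exact absurd (f.injective hyx ▸ hy) hx
    · simpa using h

lemma notMem_singularSet_pow_succ {x : ℝ} {n : ℕ} (hx : x ∉ singularSet ⇑(f ^ n))
    (hfx : (f ^ n) x ∉ singularSet f) : x ∉ singularSet ⇑(f ^ (n + 1)) := by
  rw [pow_succ', Perm.coe_mul]
  exact fun h => (singularSet_comp_subset _ _ h).elim hx hfx

lemma inv_pow_apply_mem_singularSet_iff {m : ℕ}
    (hfree : ∀ i ∈ Ioc 0 m, (f⁻¹ ^ i) c ∉ singularSet f) (k : ℕ) :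
    (f⁻¹ ^ m) c ∈ singularSet ⇑(f ^ (k + m)) ↔ c ∈ singularSet ⇑(f ^ k) := by
  induction m with
  | zero => simp
  | succ m ih =>
    rw [← add_assoc, mem_singularSet_pow_succ_iff (hfree _ ⟨m.succ_pos, le_rfl⟩),
      Perm.apply_inv_pow_succ_apply]
    exact ih fun i hi => hfree i ⟨hi.1, hi.2.trans m.le_succ⟩


/-- The times `m` at which the singular point `c` of `f` reappears as the singular point
`(f⁻¹ ^ m) c` of `f ^ n`, along a backward orbit that does not meet `singularSet f`. -/
def propagationTimes (f : Perm ℝ) (c : ℝ) (n : ℕ) : Set ℕ :=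
  {m | m ≤ n ∧ c ∈ singularSet ⇑(f ^ (n - m)) ∧ ∀ i ∈ Ioc 0 m, (f⁻¹ ^ i) c ∉ singularSet f}

lemma singularSet_pow_subset_biUnion (f : Perm ℝ) (n : ℕ) :
    singularSet ⇑(f ^ n) ⊆
      ⋃ c ∈ singularSet f, (fun m => (f⁻¹ ^ m) c) '' propagationTimes f c n := by
  induction n with
  | zero => simp [singularSet_id]
  | succ n ih =>
    intro x hx
    by_cases hxB : x ∈ singularSet f
    · exact mem_biUnion hxB ⟨0, ⟨n.zero_le.trans n.le_succ, hx, by simp⟩, rfl⟩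
    obtain ⟨c, hc, m, ⟨hmn, hcm, hfree⟩, hm⟩ :=
      mem_iUnion₂.1 (ih ((mem_singularSet_pow_succ_iff hxB n).1 hx))
    have hxm : (f⁻¹ ^ (m + 1)) c = x := by
      rw [pow_succ', Perm.mul_apply, show (f⁻¹ ^ m) c = f x from hm]
      exact f.symm_apply_apply x
    refine mem_biUnion hc ⟨m + 1, ⟨by omega, by simpa using hcm, fun i hi => ?_⟩, hxm⟩
    rcases Nat.lt_or_ge m i with him | him
    · obtain rfl : i = m + 1 := by have := hi.2; omega
      rwa [hxm]
    · exact hfree i ⟨hi.1, him⟩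

lemma ncard_singularSet_pow_le_sum (hB : (singularSet f).Finite) (n : ℕ) :
    (singularSet ⇑(f ^ n)).ncard ≤ ∑ c ∈ hB.toFinset, (propagationTimes f c n).ncard := by
  have hfin : ∀ c, (propagationTimes f c n).Finite := fun c =>
    (finite_Iic n).subset fun m hm => hm.1
  calc (singularSet ⇑(f ^ n)).ncard
      ≤ (⋃ c ∈ hB.toFinset, (fun m => (f⁻¹ ^ m) c) '' propagationTimes f c n).ncard :=
        ncard_le_ncard (by simpa using singularSet_pow_subset_biUnion f n)
          (hB.toFinset.finite_toSet.biUnion fun c _ => (hfin c).image _)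
    _ ≤ ∑ c ∈ hB.toFinset, ((fun m => (f⁻¹ ^ m) c) '' propagationTimes f c n).ncard :=
        hB.toFinset.set_ncard_biUnion_le _
    _ ≤ ∑ c ∈ hB.toFinset, (propagationTimes f c n).ncard :=
        Finset.sum_le_sum fun c _ => ncard_image_le (hfin c)

lemma ncard_propagationTimes_le_of_inv_pow_mem {r : ℕ} (hr : 0 < r)
    (hrc : (f⁻¹ ^ r) c ∈ singularSet f) (n : ℕ) : (propagationTimes f c n).ncard ≤ r := by
  have hsub : propagationTimes f c n ⊆ Iio r := fun m ⟨_, _, hfree⟩ =>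
    not_le.1 fun hrm => hfree r ⟨hr, hrm⟩ hrc
  simpa using ncard_le_ncard hsub

lemma ncard_propagationTimes_le_ncard_singularSet (hB : (singularSet f).Finite)
    (hc : c ∈ singularSet f) (hfree : ∀ i, 0 < i → (f⁻¹ ^ i) c ∉ singularSet f) (n : ℕ) :
    (propagationTimes f c n).ncard ≤ (singularSet ⇑(f ^ n)).ncard := by
  have hinj : Injective fun m : ℕ => (f⁻¹ ^ m) c :=
    Perm.injective_pow_apply fun p hp hpc => hfree p hp (by rwa [hpc])
  refine ncard_le_ncard_of_injOn _ (fun m ⟨hmn, hcm, hfree'⟩ => ?_) hinj.injOn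
    (finite_singularSet_pow hB n)
  simpa [Nat.sub_add_cancel hmn] using
    (inv_pow_apply_mem_singularSet_iff hfree' (n - m)).2 hcm

lemma eventually_mem_singularSet_pow (hB : (singularSet f).Finite)
    (hc : c ∈ singularSet f) (hfree : ∀ i, 0 < i → (f⁻¹ ^ i) c ∉ singularSet f)
    (hT : {k | c ∈ singularSet ⇑(f ^ k)}.Infinite) :
    ∃ K, ∀ k ≥ K, c ∈ singularSet ⇑(f ^ k) := by
  have hinj : Injective fun k : ℕ => (f ^ k) c := Perm.injective_pow_apply fun p hp hpc =>
    hfree p hp (by rwa [inv_pow, Perm.inv_eq_iff_eq.2 hpc.symm])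
  obtain ⟨K, hK⟩ := (hB.preimage hinj.injOn).bddAbove
  exact ⟨K + 1, hT.Ici_subset_of_notMem_succ fun k hk hck =>
    notMem_singularSet_pow_succ hck fun h => by linarith [hK h]⟩

end Iterates

theorem exists_le_ncard_singularSet_pow_add_of_unbounded {f : Perm ℝ}
    (hB : (singularSet f).Finite)
    (hub : ∀ C : ℕ, ∃ n, C < (singularSet ⇑(f ^ n)).ncard) :
    ∃ K, ∀ n, n ≤ (singularSet ⇑(f ^ n)).ncard + K := by
  obtain ⟨c, hc, hcub⟩ := hB.toFinset.exists_unbounded_of_unbounded_sum _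
    fun C => (hub C).imp fun n hn => hn.trans_le (ncard_singularSet_pow_le_sum hB n)
  rw [Finite.mem_toFinset] at hc
  have hfree : ∀ i, 0 < i → (f⁻¹ ^ i) c ∉ singularSet f := fun r hr hrc =>
    (hcub r).elim fun n hn => hn.not_ge (ncard_propagationTimes_le_of_inv_pow_mem hr hrc n)
  have hT : {k | c ∈ singularSet ⇑(f ^ k)}.Infinite := by
    intro hT
    obtain ⟨n, hn⟩ := hcub hT.toFinset.card
    refine hn.not_ge ((ncard_le_ncard_of_injOn (fun m => n - m) ?_ ?_ hT).trans_eq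
      (ncard_eq_toFinset_card _ hT))
    · exact fun m hm => hm.2.1
    · exact fun a ha b hb hab => by have := ha.1; have := hb.1; simp only at hab; omega
  obtain ⟨K, hK⟩ := eventually_mem_singularSet_pow hB hc hfree hT
  refine ⟨K, fun n => ?_⟩
  rcases lt_or_ge n K with hnK | hnK
  · omega
  have hsub : Iic (n - K) ⊆ propagationTimes f c n := fun m hm => by
    have := mem_Iic.1 hm
    exact ⟨by omega, hK _ (by omega), fun i hi => hfree i hi.1⟩
  have := (ncard_le_ncard hsub ((finite_Iic n).subset fun m hm => hm.1)).trans
    (ncard_propagationTimes_le_ncard_singularSet hB hc hfree n)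
  rw [ncard_Iic_nat] at this
  omega

lemma exists_list_prod_eq_of_mem_closure {G : Type*} [Group G] (S : Finset G) {g : G}
    (hg : g ∈ Subgroup.closure (S : Set G)) :
    ∃ l : List G, (∀ x ∈ l, x ∈ S ∨ x⁻¹ ∈ S) ∧ l.prod = g ∧ l.length = wordLength S g := by
  have hg' : g ∈ Submonoid.closure ((S : Set G) ∪ (S : Set G)⁻¹) := by
    rwa [← Subgroup.closure_toSubmonoid]
  obtain ⟨l, hl, hprod⟩ := Submonoid.exists_list_of_mem_closure hg'
  have hne : {n : ℕ | ∃ w : Fin n → G,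
      (∀ i, w i ∈ S ∨ (w i)⁻¹ ∈ S) ∧ (List.ofFn w).prod = g}.Nonempty :=
    ⟨l.length, l.get, fun i => by simpa using hl _ (List.get_mem l i), by rwa [List.ofFn_get]⟩
  obtain ⟨w, hw, hwg⟩ := Nat.sInf_mem hne
  refine ⟨List.ofFn w, ?_, hwg, List.length_ofFn⟩
  intro x hx
  obtain ⟨i, rfl⟩ := List.mem_ofFn.1 hx
  exact hw i

lemma encard_singularSet_list_prod_le {K : ℕ∞} (l : List (Perm ℝ))
    (hl : ∀ t ∈ l, (singularSet t).encard ≤ K) :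
    (singularSet ⇑l.prod).encard ≤ l.length * K := by
  induction l with
  | nil => simp [singularSet_id]
  | cons t l ih =>
    rw [List.prod_cons, Perm.coe_mul, List.length_cons, Nat.cast_succ, add_mul, one_mul]
    calc (singularSet (t ∘ l.prod)).encard
        ≤ (singularSet ⇑l.prod).encard + (⇑l.prod ⁻¹' singularSet t).encard :=
          (encard_le_encard (singularSet_comp_subset _ _)).trans (encard_union_le _ _)
      _ ≤ l.length * K + K := by
          rw [← Equiv.image_symm_eq_preimage, l.prod.symm.injective.encard_image]
          exact add_le_add (ih fun s hs => hl s (List.mem_cons_of_mem t hs))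
            (hl t List.mem_cons_self)

lemma encard_singularSet_inv_le (g : Perm ℝ) :
    (singularSet ⇑g⁻¹).encard ≤ (singularSet g).encard :=
  (encard_le_encard (singularSet_symm_subset g)).trans (encard_image_le _ _)

lemma exists_ncard_singularSet_le_mul_wordLength (S : Finset (Perm ℝ))
    (hS : ∀ g ∈ S, (singularSet g).Finite) :
    ∃ K : ℕ, ∀ g ∈ Subgroup.closure (S : Set (Perm ℝ)),
      (singularSet g).ncard ≤ K * wordLength S g := by
  refine ⟨S.sup fun s => (singularSet s).ncard, fun g hg => ?_⟩
  obtain ⟨l, hl, rfl, hlen⟩ := exists_list_prod_eq_of_mem_closure S hg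
  have hletter : ∀ s ∈ S, (singularSet s).encard ≤ S.sup fun s => (singularSet s).ncard :=
    fun s hs => by
      rw [← (hS s hs).cast_ncard_eq, Nat.cast_le]
      exact Finset.le_sup (f := fun s : Perm ℝ => (singularSet s).ncard) hs
  have hword := encard_singularSet_list_prod_le l fun t ht => (hl t ht).elim (hletter t)
    fun ht' => (inv_inv t ▸ encard_singularSet_inv_le t⁻¹).trans (hletter _ ht')
  rw [hlen, ← Nat.cast_mul, mul_comm] at hword
  exact ENat.toNat_le_of_le_natCast hword

lemma ncard_BP_le {f : ℝ → ℝ} (hf : (singularSet f).Finite) :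
    (BP f).ncard ≤ (singularSet f).ncard + 1 :=
  (ncard_le_ncard (BP_subset_insert_singularSet f) (hf.insert 0)).trans (ncard_insert_le _ _)

lemma not_tendsto_div_zero_of_le_mul_add {w : ℕ → ℕ} {K C : ℕ} (h : ∀ n, n ≤ K * w n + C) :
    ¬Tendsto (fun n : ℕ => (w n : ℝ) / n) atTop (𝓝 0) := by
  intro hw
  obtain ⟨N, hN⟩ := eventually_atTop.1
    (hw.eventually (gt_mem_nhds (show (0 : ℝ) < 1 / (2 * (K + 1)) by positivity)))
  set n := max N (2 * C + 1)
  have hn : (2 * C + 1 : ℝ) ≤ n := by exact_mod_cast le_max_right N (2 * C + 1)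
  have hsmall := hN n (le_max_left _ _)
  rw [div_lt_div_iff₀ (by linarith) (by positivity)] at hsmall
  have hlin : (n : ℝ) ≤ K * w n + C := by exact_mod_cast h n
  nlinarith [(w n).cast_nonneg (α := ℝ)]

theorem stmt_7_general (f : Equiv.Perm ℝ) (hf : IsAIET ⇑f)
    (S : Finset (Equiv.Perm ℝ)) (hS : ∀ g ∈ S, IsAIET ⇑g)
    (hfS : f ∈ Subgroup.closure (S : Set (Equiv.Perm ℝ)))
    (hdist : Filter.Tendsto (fun n : ℕ => (wordLength S (f ^ n) : ℝ) / n)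
      Filter.atTop (nhds 0)) :
    ∃ C : ℕ, ∀ n : ℕ, (BP ⇑(f ^ n)).ncard ≤ C := by
  by_contra! hub
  have hB := hf.finite_singularSet
  obtain ⟨K₀, hK₀⟩ := exists_le_ncard_singularSet_pow_add_of_unbounded hB fun C =>
    (hub (C + 1)).imp fun n hn => by
      have := ncard_BP_le (finite_singularSet_pow hB n)
      omega
  obtain ⟨K, hK⟩ := exists_ncard_singularSet_le_mul_wordLength S fun g hg =>
    (hS g hg).finite_singularSet
  exact not_tendsto_div_zero_of_le_mul_add (fun n =>
    (hK₀ n).trans (Nat.add_le_add_right (hK _ (Subgroup.pow_mem _ hfS n)) K₀)) hdist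

theorem stmt_7 (f : Equiv.Perm ℝ) (hf : IsAIET ⇑f)
    (hord : ∀ n : ℕ, 0 < n → f ^ n ≠ 1)
    (S : Finset (Equiv.Perm ℝ)) (hS : ∀ g ∈ S, IsAIET ⇑g)
    (hfS : f ∈ Subgroup.closure (S : Set (Equiv.Perm ℝ)))
    (hdist : Filter.Tendsto (fun n : ℕ => (wordLength S (f ^ n) : ℝ) / n)
      Filter.atTop (nhds 0)) :
    ∃ C : ℕ, ∀ n : ℕ, (BP ⇑(f ^ n)).ncard ≤ C :=
  stmt_7_general f hf S hS hfS hdist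
end
end

section
/- Let f be an AIET, a a break point of f whose orbit contains no periodic points, and assume all break points of f in the orbit of a lie in the segment {a, f(a), ..., f^N(a)}. If the jump Δ_{f^{N+1}}(a)=f^{N+1}_+(a)−f^{N+1}_-(a) is zero, then Δ_{f^{N+l}}(a)=0 for all l≥1; if it is nonzero, then Δ_{f^{N+l}}(a)≠0 for all l≥1. -/
open Set Filter Function MeasureTheory Topology

noncomputable section

/-!
Past the segment the orbit `yₘ = fᵐ(a)` (`m > N`) consists of interior points that are not
break points of `f`, so `f` is affine with positive slope on a whole neighbourhood of each
`yₘ`. Each iterate `fᵐ` is affine with positive slope on a left neighbourhood of `a` (of `1`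
when `a = 0`), with some left limit `zₘ`, and `Δ_{fᵐ}(a) = 0` says `zₘ = yₘ`. As `f` is a local
affine homeomorphism around `yₘ`, `f` maps left limits at `yₘ` to left limits at `f(yₘ)` and
`f⁻¹` maps them back, so `zₘ = yₘ ↔ zₘ₊₁ = yₘ₊₁`; induction on `m` gives the claim.
-/

def HasAffineLeftLim (g : ℝ → ℝ) (x y : ℝ) : Prop :=
  ∃ ε > (0 : ℝ), ∃ l > (0 : ℝ), ∃ b : ℝ,
    y = l * x + b ∧ EqOn g (fun t => l * t + b) (Ioo (x - ε) x)

namespace HasAffineLeftLim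

lemma id (x : ℝ) : HasAffineLeftLim id x x :=
  ⟨1, one_pos, 1, one_pos, 0, by ring, fun t _ => by simp⟩

lemma leftLim_eq {g : ℝ → ℝ} {x y : ℝ} (h : HasAffineLeftLim g x y) : leftLim g x = y := by
  obtain ⟨ε, hε, l, -, b, rfl, hg⟩ := h
  have hg' : (fun t => l * t + b) =ᶠ[𝓝[<] x] g :=
    eventually_of_mem (Ioo_mem_nhdsLT (by linarith)) fun t ht => (hg ht).symm
  refine leftLim_eq_of_tendsto (Tendsto.congr' hg' ?_)
  exact (Continuous.tendsto (by fun_prop) x).mono_left nhdsWithin_le_nhds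

lemma comp {g h : ℝ → ℝ} {x y z : ℝ} (hg : HasAffineLeftLim g x y)
    (hh : HasAffineLeftLim h y z) : HasAffineLeftLim (h ∘ g) x z := by
  obtain ⟨ε, hε, l, hl, b, rfl, hg⟩ := hg
  obtain ⟨ε', hε', l', hl', b', rfl, hh⟩ := hh
  refine ⟨min ε (ε' / l), by positivity, l' * l, by positivity, l' * b + b', by ring,
    fun t ⟨ht₁, ht₂⟩ => ?_⟩
  have hε₁ : min ε (ε' / l) ≤ ε := min_le_left _ _
  have hε₂ : l * min ε (ε' / l) ≤ ε' := (le_div_iff₀' hl).mp (min_le_right _ _)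
  have hgt : g t = l * t + b := hg ⟨by linarith, ht₂⟩
  have hgt_mem : g t ∈ Ioo (l * x + b - ε') (l * x + b) := by
    rw [hgt]; constructor <;> nlinarith
  show h (g t) = _
  rw [hh hgt_mem, hgt]
  ring

end HasAffineLeftLim

lemma Nat.exists_lt_and_not_succ_of_not {P : ℕ → Prop} {p : ℕ} (h₀ : P 0) (hp : ¬ P p) :
    ∃ i < p, P i ∧ ¬ P (i + 1) := by
  induction p with
  | zero => exact absurd h₀ hp
  | succ p ih =>
    by_cases hPp : P p
    · exact ⟨p, p.lt_succ_self, hPp, hp⟩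
    · obtain ⟨i, hi, hPi⟩ := ih hPp
      exact ⟨i, by omega, hPi⟩

lemma rightD_eq_of_eqOn_Ico {f : ℝ → ℝ} {v ε l b : ℝ} (hε : 0 < ε)
    (hf : EqOn f (fun t => l * t + b) (Ico v (v + ε))) : rightD f v = l := by
  have hfv : (fun t => l * t + b) =ᶠ[𝓝[≥] v] f :=
    eventually_of_mem (Ico_mem_nhdsGE (by linarith)) fun t ht => (hf ht).symm
  have hderiv : HasDerivAt (fun t => l * t + b) l v := by
    simpa using ((hasDerivAt_id v).const_mul l).add_const b
  rw [rightD, ← hfv.derivWithin_eq (hf ⟨le_rfl, by linarith⟩).symm,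
    hderiv.hasDerivWithinAt.derivWithin (uniqueDiffOn_Ici v v self_mem_Ici)]

lemma hasAffineLeftLim_of_eqOn_Ioo {f : ℝ → ℝ} {v ε l b : ℝ} (hε : 0 < ε) (hl : 0 < l)
    (hf : EqOn f (fun t => l * t + b) (Ioo (v - ε) (v + ε))) :
    HasAffineLeftLim f v (f v) :=
  ⟨ε, hε, l, hl, b, hf ⟨by linarith, by linarith⟩,
    fun t ht => hf ⟨ht.1, by linarith [ht.2]⟩⟩

lemma hasAffineLeftLim_symm_of_eqOn_Ioo {f : Equiv.Perm ℝ} {v ε l b : ℝ} (hε : 0 < ε)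
    (hl : 0 < l) (hf : EqOn f (fun t => l * t + b) (Ioo (v - ε) (v + ε))) :
    HasAffineLeftLim ⇑f⁻¹ (f v) v := by
  have hfv : f v = l * v + b := hf ⟨by linarith, by linarith⟩
  refine ⟨l * ε, by positivity, 1 / l, by positivity, -(b / l), ?_, fun s ⟨hs₁, hs₂⟩ => ?_⟩
  · rw [hfv]; field_simp; ring
  have ht : (s - b) / l ∈ Ioo (v - ε) (v + ε) := by
    rw [hfv] at hs₁ hs₂
    constructor
    · rw [lt_div_iff₀ hl]; nlinarith
    · rw [div_lt_iff₀ hl]; nlinarith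
  have hft : f ((s - b) / l) = s := by
    rw [hf ht]; field_simp; ring
  show f⁻¹ s = 1 / l * s + -(b / l)
  rw [Equiv.Perm.inv_eq_iff_eq.mpr hft.symm]
  ring

namespace IsAIET

variable {f : ℝ → ℝ}

lemma exists_hasAffineLeftLim (hf : IsAIET f) (x : ℝ) : ∃ y, HasAffineLeftLim f x y := by
  by_cases hx : x ∈ Ioc 0 1
  · obtain ⟨p, a, -, h₀, hap, -, hpieces⟩ := hf.piecewise
    obtain ⟨i, hip, hai, hxa⟩ :=
      Nat.exists_lt_and_not_succ_of_not (P := fun i => a i < x) (p := p)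
        (by simpa [h₀] using hx.1) (by simpa [hap] using hx.2)
    obtain ⟨l, b, hl, hfab⟩ := hpieces i hip
    exact ⟨l * x + b, x - a i, by linarith, l, hl, b, rfl,
      fun t ht => hfab t ⟨by linarith [ht.1], by linarith [ht.2, not_lt.mp hxa]⟩⟩
  · obtain ⟨ε, hε, hid⟩ : ∃ ε > (0 : ℝ), ∀ t ∈ Ioo (x - ε) x, t ∉ Ico (0 : ℝ) 1 := by
      rcases le_or_gt x 0 with hx0 | hx0
      · exact ⟨1, one_pos, fun t ht h => by linarith [ht.2, h.1]⟩
      · have hx1 : 1 < x := by by_contra h; exact hx ⟨hx0, not_lt.mp h⟩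
        exact ⟨x - 1, by linarith, fun t ht h => by linarith [ht.1, h.2]⟩
    exact ⟨x, ε, hε, 1, one_pos, 0, by ring, fun t ht => by simp [hf.id_outside t (hid t ht)]⟩

lemma exists_eqOn_Ico (hf : IsAIET f) {v : ℝ} (hv : v ∈ Ico (0 : ℝ) 1) :
    ∃ ε > (0 : ℝ), ∃ l > (0 : ℝ), ∃ b : ℝ, EqOn f (fun t => l * t + b) (Ico v (v + ε)) := by
  obtain ⟨p, a, -, h₀, hap, -, hpieces⟩ := hf.piecewise
  obtain ⟨i, hip, hai, hva⟩ :=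
    Nat.exists_lt_and_not_succ_of_not (P := fun i => a i ≤ v) (p := p)
      (by simpa [h₀] using hv.1) (by simpa [hap] using hv.2)
  obtain ⟨l, b, hl, hfab⟩ := hpieces i hip
  exact ⟨a (i + 1) - v, by linarith [not_le.mp hva], l, hl, b,
    fun t ht => hfab t ⟨hai.trans ht.1, by linarith [ht.2]⟩⟩

lemma exists_eqOn_Ioo_of_notMem_BP (hf : IsAIET f) {v : ℝ} (hv : v ∈ Ioo (0 : ℝ) 1)
    (hbp : v ∉ BP f) :
    ∃ ε > (0 : ℝ), ∃ l > (0 : ℝ), ∃ b : ℝ, EqOn f (fun t => l * t + b) (Ioo (v - ε) (v + ε)) := by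
  have hcont : leftLim f v = f v ∧ leftLim (rightD f) v = rightD f v := by
    by_contra h
    exact hbp (Or.inr ⟨hv, not_and_or.mp h⟩)
  obtain ⟨y, ε₁, hε₁, l₁, -, b₁, rfl, hleft⟩ := hf.exists_hasAffineLeftLim v
  obtain ⟨ε₂, hε₂, l₂, hl₂, b₂, hright⟩ := hf.exists_eqOn_Ico (Ioo_subset_Ico_self hv)
  have hslope_left : leftLim (rightD f) v = l₁ := by
    refine leftLim_eq_of_tendsto (tendsto_const_nhds.congr' ?_)
    refine eventually_of_mem (Ioo_mem_nhdsLT (sub_lt_self v hε₁)) fun t ht => ?_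
    refine (rightD_eq_of_eqOn_Ico (sub_pos.mpr ht.2) fun s hs => hleft ?_).symm
    exact ⟨by linarith [ht.1, hs.1], by linarith [hs.2]⟩
  have hl : l₁ = l₂ := by
    rw [← hslope_left, hcont.2, rightD_eq_of_eqOn_Ico hε₂ hright]
  subst hl
  have hb : b₁ = b₂ := by
    have h := (HasAffineLeftLim.leftLim_eq ⟨ε₁, hε₁, l₁, hl₂, b₁, rfl, hleft⟩).symm.trans
      (hcont.1.trans (hright ⟨le_rfl, by linarith⟩))
    linarith
  subst hb
  refine ⟨min ε₁ ε₂, lt_min hε₁ hε₂, l₁, hl₂, b₁, fun t ⟨ht₁, ht₂⟩ => ?_⟩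
  rcases lt_or_ge t v with htv | htv
  · exact hleft ⟨by linarith [min_le_left ε₁ ε₂], htv⟩
  · exact hright ⟨htv, by linarith [min_le_right ε₁ ε₂]⟩

end IsAIET

lemma IsAIET.exists_hasAffineLeftLim_pow {f : Equiv.Perm ℝ} (hf : IsAIET f) (m : ℕ)
    (x : ℝ) : ∃ y, HasAffineLeftLim ⇑(f ^ m) x y := by
  induction m with
  | zero => exact ⟨x, HasAffineLeftLim.id x⟩
  | succ m ih =>
    obtain ⟨y, hy⟩ := ih
    obtain ⟨z, hz⟩ := hf.exists_hasAffineLeftLim y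
    exact ⟨z, by simpa only [pow_succ', Equiv.Perm.coe_mul] using hy.comp hz⟩

lemma IsAIET.leftLim_comp_eq_iff_of_notMem_BP {f : Equiv.Perm ℝ} (hf : IsAIET f) {v : ℝ}
    (hv : v ∈ Ioo (0 : ℝ) 1) (hbp : v ∉ BP f) {g : ℝ → ℝ} {x y : ℝ}
    (hg : HasAffineLeftLim g x y) : leftLim (f ∘ g) x = f v ↔ leftLim g x = v := by
  obtain ⟨ε, hε, l, hl, b, haff⟩ := hf.exists_eqOn_Ioo_of_notMem_BP hv hbp
  constructor
  · intro h
    obtain ⟨z, hz⟩ := hf.exists_hasAffineLeftLim y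
    have hfg := hg.comp hz
    rw [hfg.leftLim_eq] at h
    subst h
    simpa [Function.comp_def] using
      (hfg.comp (hasAffineLeftLim_symm_of_eqOn_Ioo hε hl haff)).leftLim_eq
  · intro h
    rw [hg.leftLim_eq] at h
    subst h
    exact (hg.comp (hasAffineLeftLim_of_eqOn_Ioo hε hl haff)).leftLim_eq

lemma Δjump_eq_zero_iff (g : ℝ → ℝ) (a : ℝ) :
    Δjump g a = 0 ↔ leftLim g (if a = 0 then 1 else a) = g a := by
  unfold Δjump
  split_ifs with ha
  · rw [ha, sub_eq_zero, eq_comm]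
  · rw [sub_eq_zero, eq_comm]

lemma IsAIET.Δjump_pow_succ_eq_zero_iff {f : Equiv.Perm ℝ} (hf : IsAIET f) {a : ℝ} {m : ℕ}
    (hv : (f ^ m) a ∈ Ioo (0 : ℝ) 1) (hbp : (f ^ m) a ∉ BP f) :
    Δjump ⇑(f ^ (m + 1)) a = 0 ↔ Δjump ⇑(f ^ m) a = 0 := by
  obtain ⟨y, hy⟩ := hf.exists_hasAffineLeftLim_pow m (if a = 0 then 1 else a)
  rw [Δjump_eq_zero_iff, Δjump_eq_zero_iff, pow_succ', Equiv.Perm.coe_mul]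
  exact hf.leftLim_comp_eq_iff_of_notMem_BP hv hbp hy

theorem stmt_8_general (f : Equiv.Perm ℝ) (hf : IsAIET ⇑f) (a : ℝ)
    (hnp : ∀ k : ℕ, 0 < k → (f ^ k) a ≠ a) (N : ℕ)
    (hseg : ∀ x ∈ BP ⇑f, (∃ k : ℤ, (f ^ k) a = x) → ∃ k : ℕ, k ≤ N ∧ x = (f ^ k) a) :
    (Δjump ⇑(f ^ (N + 1)) a = 0 → ∀ l : ℕ, 1 ≤ l → Δjump ⇑(f ^ (N + l)) a = 0) ∧
    (Δjump ⇑(f ^ (N + 1)) a ≠ 0 → ∀ l : ℕ, 1 ≤ l → Δjump ⇑(f ^ (N + l)) a ≠ 0) := by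
  have ha : a ∈ Ico (0 : ℝ) 1 := by
    by_contra h
    exact hnp 1 one_pos (by simpa using hf.id_outside a h)
  have hnotMem : ∀ m, N < m → (f ^ m) a ∉ BP f := by
    rintro m hm hmem
    obtain ⟨j, hj, hmj⟩ := hseg _ hmem ⟨m, by rw [zpow_natCast]⟩
    refine hnp (m - j) (by omega) ((f ^ j).injective ?_)
    rw [← Equiv.Perm.mul_apply, pow_mul_pow_sub f (by omega), hmj]
  have hmem : ∀ m, N < m → (f ^ m) a ∈ Ioo (0 : ℝ) 1 := fun m hm =>
    have hI := hf.bijOn.mapsTo.perm_pow m ha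
    ⟨hI.1.lt_of_ne fun h => hnotMem m hm (Or.inl h.symm), hI.2⟩
  have hiff : ∀ l, 1 ≤ l → (Δjump ⇑(f ^ (N + l)) a = 0 ↔ Δjump ⇑(f ^ (N + 1)) a = 0) := by
    intro l hl
    induction l, hl using Nat.le_induction with
    | base => rfl
    | succ l hl ih =>
      rw [← ih, ← add_assoc]
      exact hf.Δjump_pow_succ_eq_zero_iff (hmem _ (by omega)) (hnotMem _ (by omega))
  exact ⟨fun h l hl => (hiff l hl).2 h, fun h l hl h' => h ((hiff l hl).1 h')⟩

theorem stmt_8 (f : Equiv.Perm ℝ) (hf : IsAIET ⇑f) (a : ℝ) (ha : a ∈ BP ⇑f)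
    (hnp : ∀ k : ℕ, 0 < k → (f ^ k) a ≠ a) (N : ℕ)
    (hseg : ∀ x ∈ BP ⇑f, (∃ k : ℤ, (f ^ k) a = x) → ∃ k : ℕ, k ≤ N ∧ x = (f ^ k) a) :
    (Δjump ⇑(f ^ (N + 1)) a = 0 → ∀ l : ℕ, 1 ≤ l → Δjump ⇑(f ^ (N + l)) a = 0) ∧
    (Δjump ⇑(f ^ (N + 1)) a ≠ 0 → ∀ l : ℕ, 1 ≤ l → Δjump ⇑(f ^ (N + l)) a ≠ 0) :=
  stmt_8_general f hf a hnp N hseg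
end
end

section
/- Let f be an AIET and a an initial break point of f (so f^{-k}(a)∉BP(f) for all k≥1). Then for every positive integer n and every 0 ≤ k ≤ n−1, the discontinuity jump of f^n at f^{-k}(a) equals the discontinuity jump of f^{n−k} at a: Δ_{f^n}(f^{-k}(a)) = Δ_{f^{n−k}}(a). -/
open Set Filter Function MeasureTheory Topology

noncomputable section

/-!
At a point `x ∈ (0,1)` where an AIET `f` is continuous, `f` is increasing and affine just to the
left of `x`, so it maps left neighbourhoods of `x` into left neighbourhoods of `f x`. Hence the left
limit of `f^(m+1)` at `x` is the left limit of `f^m` at `f x`, i.e. `Δ_{f^(m+1)}(x) = Δ_{f^m}(f x)`.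
Since `a` is an initial break point, every `f^(-j)(a)` with `j ≥ 1` is such a continuity point, and
the identity can be iterated along the backward orbit of `a`.
-/

theorem exists_mem_Ioc_succ {α : Type*} [LinearOrder α] {a : ℕ → α} {x : α} :
    ∀ {p : ℕ}, a 0 < x → x ≤ a p → ∃ i < p, x ∈ Ioc (a i) (a (i + 1))
  | 0, h0, hp => absurd hp (not_le.mpr h0)
  | p + 1, h0, hp => by
    by_cases hxp : x ≤ a p
    · obtain ⟨i, hip, hi⟩ := exists_mem_Ioc_succ h0 hxp
      exact ⟨i, hip.trans p.lt_succ_self, hi⟩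
    · exact ⟨p, p.lt_succ_self, not_le.mp hxp, hp⟩

theorem tendsto_affine_nhdsLT {lam : ℝ} (hlam : 0 < lam) (beta x : ℝ) :
    Tendsto (fun y => lam * y + beta) (𝓝[<] x) (𝓝[<] (lam * x + beta)) := by
  refine tendsto_nhdsWithin_of_tendsto_nhds_of_eventually_within _ ?_ ?_
  · exact (Continuous.tendsto (by fun_prop) x).mono_left nhdsWithin_le_nhds
  · filter_upwards [self_mem_nhdsWithin] with y (hy : y < x)
    show lam * y + beta < lam * x + beta
    gcongr

theorem mem_Ioo_and_leftLim_eq_of_notMem_BP {f : ℝ → ℝ} {x : ℝ} (hx : x ∈ Ico (0 : ℝ) 1)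
    (hBP : x ∉ BP f) :
    x ∈ Ioo (0 : ℝ) 1 ∧ leftLim f x = f x := by
  have hx0 : x ≠ 0 := fun h => hBP (Or.inl h)
  have hIoo : x ∈ Ioo (0 : ℝ) 1 := ⟨hx.1.lt_of_ne' hx0, hx.2⟩
  exact ⟨hIoo, by_contra fun h => hBP (Or.inr ⟨hIoo, Or.inl h⟩)⟩

theorem BP_subset_Ico (f : ℝ → ℝ) : BP f ⊆ Ico (0 : ℝ) 1 := by
  rintro x (rfl | ⟨hx, -⟩)
  · exact ⟨le_rfl, one_pos⟩
  · exact Ioo_subset_Ico_self hx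

namespace IsAIET

section

variable {f : ℝ → ℝ}

theorem exists_tendsto_nhdsLT (hf : IsAIET f) {x : ℝ} (hx : x ∈ Ioc (0 : ℝ) 1) :
    ∃ v ∈ Ioc (0 : ℝ) 1, Tendsto f (𝓝[<] x) (𝓝[<] v) := by
  obtain ⟨p, a, -, ha0, hap, -, hpiece⟩ := hf.piecewise
  obtain ⟨i, hip, hai, hxa⟩ := exists_mem_Ioc_succ (ha0 ▸ hx.1) (hap ▸ hx.2)
  obtain ⟨lam, beta, hlam, hf_eq⟩ := hpiece i hip
  have h_affine : ∀ᶠ y in 𝓝[<] x, f y = lam * y + beta := by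
    filter_upwards [Ioo_mem_nhdsLT hai] with y hy
    exact hf_eq y ⟨hy.1.le, hy.2.trans_le hxa⟩
  have h_maps : ∀ᶠ y in 𝓝[<] x, y < x ∧ f y ∈ Ico (0 : ℝ) 1 := by
    filter_upwards [Ioo_mem_nhdsLT hx.1] with y hy
    exact ⟨hy.2, hf.bijOn.mapsTo ⟨hy.1.le, hy.2.trans_le hx.2⟩⟩
  have h_tendsto : Tendsto f (𝓝[<] x) (𝓝[<] (lam * x + beta)) :=
    (tendsto_affine_nhdsLT hlam beta x).congr' (h_affine.mono fun _ h => h.symm)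
  obtain ⟨y, hy_eq, hyx, hy_mem⟩ := (h_affine.and h_maps).exists
  refine ⟨lam * x + beta, ⟨?_, ?_⟩, h_tendsto⟩
  · nlinarith [hy_mem.1]
  · exact le_of_tendsto (h_tendsto.mono_right nhdsWithin_le_nhds)
      (h_maps.mono fun _ h => h.2.2.le)

theorem exists_tendsto_iterate_nhdsLT (hf : IsAIET f) (m : ℕ) {x : ℝ} (hx : x ∈ Ioc (0 : ℝ) 1) :
    ∃ v ∈ Ioc (0 : ℝ) 1, Tendsto f^[m] (𝓝[<] x) (𝓝[<] v) := by
  induction m generalizing x with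
  | zero => exact ⟨x, hx, tendsto_id⟩
  | succ m ih =>
    obtain ⟨v, hv, hfv⟩ := hf.exists_tendsto_nhdsLT hx
    obtain ⟨w, hw, hmw⟩ := ih hv
    exact ⟨w, hw, by rw [iterate_succ]; exact hmw.comp hfv⟩

theorem Δjump_iterate_succ (hf : IsAIET f) {x : ℝ} (hx : x ∈ Ioo (0 : ℝ) 1)
    (hc : leftLim f x = f x) (m : ℕ) :
    Δjump f^[m + 1] x = Δjump f^[m] (f x) := by
  obtain ⟨v, hv, hfv⟩ := hf.exists_tendsto_nhdsLT (Ioo_subset_Ioc_self hx)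
  have hfx : f x = v := by
    rw [← hc, leftLim_eq_of_tendsto (hfv.mono_right nhdsWithin_le_nhds)]
  obtain ⟨w, -, hmw⟩ := hf.exists_tendsto_iterate_nhdsLT m hv
  have h_succ : leftLim f^[m + 1] x = w := by
    rw [iterate_succ]
    exact leftLim_eq_of_tendsto ((hmw.comp hfv).mono_right nhdsWithin_le_nhds)
  have h_iter : leftLim f^[m] (f x) = w := by
    rw [hfx]
    exact leftLim_eq_of_tendsto (hmw.mono_right nhdsWithin_le_nhds)
  rw [Δjump, Δjump, if_neg hx.1.ne', if_neg (hfx ▸ hv.1.ne'), h_succ, h_iter, iterate_succ_apply]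

end

theorem mapsTo_inv {f : Equiv.Perm ℝ} (hf : IsAIET f) :
    MapsTo ⇑f⁻¹ (Ico (0 : ℝ) 1) (Ico 0 1) := by
  intro y hy
  obtain ⟨z, hz, rfl⟩ := hf.bijOn.surjOn hy
  simpa using hz

theorem Δjump_iterate_inv_pow {f : Equiv.Perm ℝ} (hf : IsAIET f) {a : ℝ}
    (h_orbit : ∀ j, 1 ≤ j → (f⁻¹ ^ j) a ∈ Ioo (0 : ℝ) 1 ∧
      leftLim f ((f⁻¹ ^ j) a) = f ((f⁻¹ ^ j) a))
    {n k : ℕ} (hk : k ≤ n) :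
    Δjump f^[n] ((f⁻¹ ^ k) a) = Δjump f^[n - k] a := by
  induction k generalizing n with
  | zero => rfl
  | succ k ih =>
    obtain ⟨m, rfl⟩ : ∃ m, n = m + 1 := ⟨n - 1, by omega⟩
    obtain ⟨hx, hc⟩ := h_orbit (k + 1) le_add_self
    have hfx : f ((f⁻¹ ^ (k + 1)) a) = (f⁻¹ ^ k) a := by
      rw [pow_succ', Equiv.Perm.mul_apply, Equiv.Perm.coe_inv, Equiv.apply_symm_apply]
    rw [hf.Δjump_iterate_succ hx hc, hfx, ih (by omega), Nat.add_sub_add_right]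

end IsAIET

theorem stmt_9 (f : Equiv.Perm ℝ) (hf : IsAIET ⇑f) (a : ℝ) (ha : a ∈ BP ⇑f)
    (hinit : ∀ k : ℕ, 1 ≤ k → (f⁻¹ ^ k) a ∉ BP ⇑f) :
    ∀ n k : ℕ, 1 ≤ n → k ≤ n - 1 →
      Δjump ⇑(f ^ n) ((f⁻¹ ^ k) a) = Δjump ⇑(f ^ (n - k)) a := by
  intro n k _ hk
  have h_orbit (j : ℕ) (hj : 1 ≤ j) :
      (f⁻¹ ^ j) a ∈ Ioo (0 : ℝ) 1 ∧ leftLim f ((f⁻¹ ^ j) a) = f ((f⁻¹ ^ j) a) := by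
    refine mem_Ioo_and_leftLim_eq_of_notMem_BP ?_ (hinit j hj)
    rw [Equiv.Perm.coe_pow]
    exact hf.mapsTo_inv.iterate j (BP_subset_Ico f ha)
  rw [Equiv.Perm.coe_pow, Equiv.Perm.coe_pow]
  exact hf.Δjump_iterate_inv_pow h_orbit (by omega)
end
end

section
/- Let I=[a,b) be a half-open interval, α/|I| irrational, and g an interval exchange transformation of I commuting with the restricted rotation R_α of I; if additionally g preserves Lebesgue measure on I, then g is itself a restricted rotation of I. -/
open Set Filter Function MeasureTheory Topology

noncomputable section

/-- An interval exchange transformation of `I = [a,b)`: a bijection of `I`, the identity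
outside `I`, which is piecewise a translation on finitely many half-open intervals. -/
structure IsIETOn (g : ℝ → ℝ) (a b : ℝ) : Prop where
  bijOn : Set.BijOn g (Set.Ico a b) (Set.Ico a b)
  id_outside : ∀ x, x ∉ Set.Ico a b → g x = x
  piecewise : ∃ (p : ℕ) (c : ℕ → ℝ), 0 < p ∧ c 0 = a ∧ c p = b ∧
    (∀ i j, i < j → j ≤ p → c i < c j) ∧
    ∀ i < p, ∃ t : ℝ, ∀ x ∈ Set.Ico (c i) (c (i + 1)), g x = x + t

/-! The displacement `x ↦ g x - x`, read modulo `|I|`, is invariant under `R_α` because `g`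
commutes with `R_α`, hence constant along `R_α`-orbits. It is also constant on each piece of
the exchange, and every piece meets the orbit of `a`, which is dense since `α / |I|` is
irrational. So `g x ≡ x + (g a - a)` modulo `|I|` on all of `I`, i.e. `g = R_{g a - a}`. -/

section RestrictedRotation

variable {a b δ : ℝ}

lemma eq_of_coe_eq_of_mem_Ico {x y : ℝ} (hx : x ∈ Ico a b) (hy : y ∈ Ico a b)
    (h : (x : AddCircle (b - a)) = y) : x = y := by
  have : Fact (0 < b - a) := ⟨by linarith [hx.1, hx.2]⟩
  rw [← add_sub_cancel a b] at hx hy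
  exact (AddCircle.coe_eq_coe_iff_of_mem_Ico hx hy).1 h

lemma RR_of_notMem (hδ : 0 ≤ δ) (hδL : δ ≤ b - a) {x : ℝ} (hx : x ∉ Ico a b) :
    RR a b δ x = x := by
  have h₁ : x ∉ Ico a (b - δ) := fun h => hx ⟨h.1, by linarith [h.2]⟩
  have h₂ : x ∉ Ico (b - δ) b := fun h => hx ⟨by linarith [h.1], h.2⟩
  simp only [RR, if_neg h₁, if_neg h₂]

lemma RR_mapsTo (hδ : 0 ≤ δ) (hδL : δ ≤ b - a) : MapsTo (RR a b δ) (Ico a b) (Ico a b) := by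
  intro x ⟨hax, hxb⟩
  unfold RR
  split_ifs with h₁ h₂
  · exact ⟨by linarith, by linarith [h₁.2]⟩
  · exact ⟨by linarith [h₂.1], by linarith⟩
  · exact ⟨hax, hxb⟩

lemma coe_RR {x : ℝ} (hx : x ∈ Ico a b) :
    (RR a b δ x : AddCircle (b - a)) = x + δ := by
  unfold RR
  split_ifs with h₁ h₂
  · rfl
  · rw [AddCircle.coe_sub, AddCircle.coe_period, sub_zero, AddCircle.coe_add]
  · exact absurd ⟨not_lt.1 fun h => h₁ ⟨hx.1, h⟩, hx.2⟩ h₂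

lemma coe_RR_iterate (hδ : 0 ≤ δ) (hδL : δ ≤ b - a) (n : ℕ) {x : ℝ} (hx : x ∈ Ico a b) :
    ((RR a b δ)^[n] x : AddCircle (b - a)) = x + n • (δ : AddCircle (b - a)) := by
  induction n with
  | zero => simp
  | succ n ih =>
    rw [iterate_succ_apply', coe_RR ((RR_mapsTo hδ hδL).iterate n hx), ih, succ_nsmul, add_assoc]

lemma eq_RR_of_coe_eq (hδ : 0 ≤ δ) (hδL : δ ≤ b - a) {x y : ℝ} (hx : x ∈ Ico a b)
    (hy : y ∈ Ico a b) (h : (y : AddCircle (b - a)) = x + δ) : y = RR a b δ x :=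
  eq_of_coe_eq_of_mem_Ico hy (RR_mapsTo hδ hδL hx) (by rw [h, coe_RR hx])

end RestrictedRotation

lemma exists_mem_Ioo_coe_eq_add_zsmul {α L : ℝ} (hirr : Irrational (α / L)) (a : ℝ) {u v : ℝ}
    (huv : u < v) : ∃ y ∈ Ioo u v, ∃ m : ℤ, (y : AddCircle L) = a + m • (α : AddCircle L) := by
  obtain ⟨s, hs, hsuv⟩ := (dense_addSubgroupClosure_pair_iff.2 hirr).exists_mem_open
    (isOpen_Ioo (a := u - a) (b := v - a)) (nonempty_Ioo.2 (by linarith))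
  obtain ⟨m, n, rfl⟩ := AddSubgroup.mem_closure_pair.1 hs
  refine ⟨a + (m • α + n • L), ⟨by linarith [hsuv.1], by linarith [hsuv.2]⟩, m, ?_⟩
  rw [AddCircle.coe_add, AddCircle.coe_add, AddCircle.coe_zsmul, AddCircle.coe_zsmul,
    AddCircle.coe_period, smul_zero, add_zero]

lemma IsIETOn.exists_translation_piece {g : ℝ → ℝ} {a b : ℝ} (hg : IsIETOn g a b) {x : ℝ}
    (hx : x ∈ Ico a b) :
    ∃ u v t : ℝ, x ∈ Ico u v ∧ Ico u v ⊆ Ico a b ∧ ∀ z ∈ Ico u v, g z = z + t := by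
  obtain ⟨p, c, hp, hc0, hcp, hc, hpiece⟩ := hg.piecewise
  have hex : ∃ i, x < c (i + 1) := ⟨p - 1, by rw [Nat.sub_add_cancel hp, hcp]; exact hx.2⟩
  set i := Nat.find hex
  have hip : i < p := by
    have := Nat.find_min' hex (m := p - 1) (by rw [Nat.sub_add_cancel hp, hcp]; exact hx.2)
    omega
  have hci : c i ≤ x := by
    rcases hi : i with _ | j
    · rw [hc0]; exact hx.1
    · exact not_lt.1 (Nat.find_min hex (show j < i by omega))
  have hc_le : ∀ j k, j ≤ k → k ≤ p → c j ≤ c k := fun j k hjk hk =>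
    hjk.eq_or_lt.elim (fun h => h ▸ le_rfl) (fun h => (hc j k h hk).le)
  have hca : a ≤ c i := hc0 ▸ hc_le 0 i i.zero_le hip.le
  have hcb : c (i + 1) ≤ b := hcp ▸ hc_le (i + 1) p hip le_rfl
  obtain ⟨t, ht⟩ := hpiece i hip
  exact ⟨c i, c (i + 1), t, ⟨hci, Nat.find_spec hex⟩, Ico_subset_Ico hca hcb, ht⟩

section Commuting

variable {a b α : ℝ} {g : ℝ → ℝ}

lemma coe_displacement_RR_iterate (hα : 0 ≤ α) (hα' : α ≤ b - a)
    (hg : MapsTo g (Ico a b) (Ico a b)) (hcomm : Function.Commute g (RR a b α)) (n : ℕ) {x : ℝ}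
    (hx : x ∈ Ico a b) :
    ((g ((RR a b α)^[n] x) - (RR a b α)^[n] x : ℝ) : AddCircle (b - a)) = (g x - x : ℝ) := by
  rw [hcomm.iterate_right n x, AddCircle.coe_sub, AddCircle.coe_sub,
    coe_RR_iterate hα hα' n (hg hx), coe_RR_iterate hα hα' n hx, add_sub_add_right_eq_sub]

lemma coe_displacement_eq_of_coe_eq_add_zsmul (hα : 0 ≤ α) (hα' : α ≤ b - a)
    (hg : MapsTo g (Ico a b) (Ico a b)) (hcomm : Function.Commute g (RR a b α)) {x y : ℝ}
    (hx : x ∈ Ico a b) (hy : y ∈ Ico a b) {m : ℤ}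
    (hxy : (y : AddCircle (b - a)) = x + m • (α : AddCircle (b - a))) :
    ((g y - y : ℝ) : AddCircle (b - a)) = (g x - x : ℝ) := by
  obtain ⟨n, rfl | rfl⟩ := Int.eq_nat_or_neg m
  · have : y = (RR a b α)^[n] x := eq_of_coe_eq_of_mem_Ico hy
      ((RR_mapsTo hα hα').iterate n hx) (by rw [hxy, coe_RR_iterate hα hα' n hx, natCast_zsmul])
    rw [this, coe_displacement_RR_iterate hα hα' hg hcomm n hx]
  · have : x = (RR a b α)^[n] y := eq_of_coe_eq_of_mem_Ico hx
      ((RR_mapsTo hα hα').iterate n hy) (by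
        rw [coe_RR_iterate hα hα' n hy, hxy, neg_zsmul, natCast_zsmul, neg_add_cancel_right])
    rw [this, coe_displacement_RR_iterate hα hα' hg hcomm n hy]

lemma coe_displacement_eq_of_commute (hα : 0 ≤ α) (hα' : α ≤ b - a)
    (hirr : Irrational (α / (b - a))) (hg : IsIETOn g a b)
    (hcomm : Function.Commute g (RR a b α)) {x : ℝ} (hx : x ∈ Ico a b) :
    ((g x - x : ℝ) : AddCircle (b - a)) = (g a - a : ℝ) := by
  obtain ⟨u, v, t, hxuv, huv, ht⟩ := hg.exists_translation_piece hx
  obtain ⟨y, hy, m, hym⟩ := exists_mem_Ioo_coe_eq_add_zsmul hirr a (hxuv.1.trans_lt hxuv.2)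
  have hy' : y ∈ Ico u v := Ioo_subset_Ico_self hy
  have hgy : g y - y = g x - x := by rw [ht y hy', ht x hxuv]; ring
  rw [← hgy]
  exact coe_displacement_eq_of_coe_eq_add_zsmul hα hα' hg.bijOn.mapsTo hcomm
    ⟨le_rfl, by linarith [hx.1, hx.2]⟩ (huv hy') hym

end Commuting

theorem stmt_18_general (a b α : ℝ) (hα : 0 < α) (hα' : α < b - a)
    (hirr : Irrational (α / (b - a)))
    (g : ℝ → ℝ) (hg : IsIETOn g a b)
    (hcomm : ∀ x, g (RR a b α x) = RR a b α (g x)) :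
    ∃ d : ℝ, 0 ≤ d ∧ d < b - a ∧ g = RR a b d := by
  have ha : a ∈ Ico a b := ⟨le_rfl, by linarith⟩
  obtain ⟨hga, hgb⟩ := hg.bijOn.mapsTo ha
  refine ⟨g a - a, by linarith, by linarith, funext fun x => ?_⟩
  by_cases hx : x ∈ Ico a b
  · refine eq_RR_of_coe_eq (by linarith) (by linarith) hx (hg.bijOn.mapsTo hx) ?_
    rw [← coe_displacement_eq_of_commute hα.le hα'.le hirr hg hcomm hx, ← AddCircle.coe_add,
      add_sub_cancel]
  · rw [hg.id_outside x hx, RR_of_notMem (by linarith) (by linarith) hx]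

theorem stmt_18 (a b α : ℝ) (hab : a < b) (hα : 0 < α) (hα' : α < b - a)
    (hirr : Irrational (α / (b - a)))
    (g : ℝ → ℝ) (hg : IsIETOn g a b)
    (hcomm : ∀ x, g (RR a b α x) = RR a b α (g x))
    (hleb : Measure.map g (volume.restrict (Set.Ico a b)) =
      volume.restrict (Set.Ico a b)) :
    ∃ d : ℝ, 0 ≤ d ∧ d < b - a ∧ g = RR a b d :=
  stmt_18_general a b α hα hα' hirr g hg hcomm
end
end
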